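/- arXiv:2510.06398 — 7 statements merged into one kernel-verified Lean document; each statement's English description precedes it below -/
import Mathlib

section
/- Let 𝒳 be a fundamental minimal system for 𝕏 and K ≥ 1. Suppose that for each f in the linear span ⟨𝒳⟩ there is m(f) ∈ ℕ such that ‖f‖ ≤ K‖f + g‖ for every g in the linear span of 𝒳_{>m(f)}. Then for each f ∈ ⟨𝒳⟩ there exists f* in the linear span ⟨𝒳*⟩ of the dual system such that f*(f) = ‖f‖ and ‖f*‖ ≤ K. -/
/-!
The tail estimate says that `f` lies at distance at least `‖f‖ / K` from the span `T` of the tail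
`(x n)_{n > m}`. Hahn–Banach in the quotient `X ⧸ T` then yields a functional of norm at most `K`
that vanishes on `T` and takes the value `‖f‖` at `f`. By density and biorthogonality, a
functional vanishing on every `x n` with `n > m` equals `∑_{j ≤ m} φ (x j) • xs j`, so it lies
in the span of the dual system.
-/

open Metric

section DualVanishing

variable {𝕜 E : Type*} [RCLike 𝕜] [SeminormedAddCommGroup E] [NormedSpace 𝕜 E]

theorem Submodule.exists_dual_map_eq_zero_and_eq_infDist (T : Submodule 𝕜 E) (z : E) :
    ∃ φ : StrongDual 𝕜 E, ‖φ‖ ≤ 1 ∧ (∀ y ∈ T, φ y = 0) ∧ φ z = infDist z T := by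
  obtain ⟨g, hg, hgz⟩ := exists_dual_vector'' 𝕜 (T.mkQL z)
  refine ⟨g ∘L T.mkQL, ?_, fun y hy => ?_, ?_⟩
  · refine ContinuousLinearMap.opNorm_le_bound _ zero_le_one fun y => ?_
    calc ‖g (T.mkQL y)‖ ≤ ‖g‖ * ‖T.mkQL y‖ := g.le_opNorm _
      _ ≤ 1 * ‖y‖ := mul_le_mul hg (Submodule.Quotient.norm_mk_le T y) (norm_nonneg _) zero_le_one
  · simp [(Submodule.Quotient.mk_eq_zero T).2 hy]
  · rw [ContinuousLinearMap.comp_apply, hgz]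
    exact congrArg _ (QuotientAddGroup.norm_mk (S := T.toAddSubgroup) z)

theorem Submodule.exists_dual_map_eq_zero_and_eq_norm_of_norm_le_mul_infDist
    (T : Submodule 𝕜 E) {z : E} {K : ℝ} (hK : 0 ≤ K) (hz : ‖z‖ ≤ K * infDist z T) :
    ∃ ψ : StrongDual 𝕜 E, ‖ψ‖ ≤ K ∧ (∀ y ∈ T, ψ y = 0) ∧ ψ z = ‖z‖ := by
  obtain ⟨φ, hφ, hφT, hφz⟩ := T.exists_dual_map_eq_zero_and_eq_infDist z
  set d := infDist z T
  rcases (infDist_nonneg : 0 ≤ d).eq_or_lt with hd | hd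
  · have hz0 : ‖z‖ = 0 := le_antisymm (hz.trans_eq (by simp [d, ← hd])) (norm_nonneg z)
    exact ⟨0, by simpa using hK, fun _ _ => rfl, by simp [hz0]⟩
  refine ⟨((‖z‖ / d : ℝ) : 𝕜) • φ, ?_, fun y hy => by simp [hφT y hy], ?_⟩
  · calc ‖((‖z‖ / d : ℝ) : 𝕜) • φ‖ = ‖z‖ / d * ‖φ‖ := by
          rw [norm_smul, RCLike.norm_ofReal, abs_of_nonneg (by positivity)]
      _ ≤ ‖z‖ / d * 1 := by gcongr
      _ ≤ K := by rw [mul_one, div_le_iff₀ hd]; exact hz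
  · rw [smul_apply, hφz, smul_eq_mul, ← RCLike.ofReal_mul,
      div_mul_cancel₀ _ hd.ne']

end DualVanishing

theorem Submodule.norm_le_mul_infDist_of_forall_norm_le_mul_norm_add {E : Type*}
    [SeminormedAddCommGroup E] {R : Type*} [Ring R] [Module R E] (T : Submodule R E) {z : E}
    {K : ℝ} (hK : 0 < K) (h : ∀ y ∈ T, ‖z‖ ≤ K * ‖z + y‖) : ‖z‖ ≤ K * infDist z T := by
  rw [← div_le_iff₀' hK, le_infDist ⟨0, T.zero_mem⟩]
  intro y hy
  rw [div_le_iff₀' hK, dist_eq_norm, sub_eq_add_neg]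
  exact h (-y) (T.neg_mem hy)

theorem eq_sum_coord_of_map_eq_zero_of_lt {R M : Type*} [CommSemiring R] [TopologicalSpace R]
    [T2Space R] [IsTopologicalSemiring R] [AddCommMonoid M] [TopologicalSpace M] [Module R M]
    {x : ℕ → M} {xs : ℕ → M →L[R] R} (hdense : Dense (Submodule.span R (Set.range x) : Set M))
    (hbi : ∀ n k, xs n (x k) = if n = k then 1 else 0) (φ : M →L[R] R) (m : ℕ)
    (hφ : ∀ n, m < n → φ (x n) = 0) :
    φ = ∑ j ∈ Finset.range (m + 1), φ (x j) • xs j := by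
  refine ContinuousLinearMap.ext_on hdense ?_
  rintro _ ⟨k, rfl⟩
  simp only [sum_apply, smul_apply, hbi, smul_eq_mul,
    mul_ite, mul_one, mul_zero, Finset.sum_ite_eq', Finset.mem_range]
  split_ifs with hk
  · rfl
  · exact hφ k (by omega)

theorem tail_estimate_implies_norming_functional_general
    {𝕜 : Type*} [RCLike 𝕜] {X : Type*} [NormedAddCommGroup X] [NormedSpace 𝕜 X]
    (x : ℕ → X) (xs : ℕ → X →L[𝕜] 𝕜)
    (hdense : Dense (Submodule.span 𝕜 (Set.range x) : Set X))
    (hbi : ∀ n k, xs n (x k) = if n = k then 1 else 0)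
    (K : ℝ) (hK : 1 ≤ K)
    (h : ∀ f ∈ Submodule.span 𝕜 (Set.range x), ∃ m : ℕ,
      ∀ g ∈ Submodule.span 𝕜 (x '' {n | m < n}), ‖f‖ ≤ K * ‖f + g‖) :
    ∀ f ∈ Submodule.span 𝕜 (Set.range x),
      ∃ fs ∈ Submodule.span 𝕜 (Set.range xs), fs f = (‖f‖ : 𝕜) ∧ ‖fs‖ ≤ K := by
  intro f hf
  obtain ⟨m, hm⟩ := h f hf
  set T := Submodule.span 𝕜 (x '' {n | m < n})
  obtain ⟨ψ, hψK, hψT, hψf⟩ := T.exists_dual_map_eq_zero_and_eq_norm_of_norm_le_mul_infDist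
    (zero_le_one.trans hK) (T.norm_le_mul_infDist_of_forall_norm_le_mul_norm_add
      (zero_lt_one.trans_le hK) hm)
  have hψ := eq_sum_coord_of_map_eq_zero_of_lt hdense hbi ψ m fun n hn =>
    hψT _ (Submodule.subset_span ⟨n, hn, rfl⟩)
  refine ⟨ψ, ?_, hψf, hψK⟩
  rw [hψ]
  exact Submodule.sum_mem _ fun j _ => Submodule.smul_mem _ _ (Submodule.subset_span ⟨j, rfl⟩)

/-- If for each `f` in the span of `𝒳` there is `m(f)` such that
`‖f‖ ≤ K‖f + g‖` for every `g` in the span of `𝒳_{>m(f)}`, then for each such `f` there is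
`f* ∈ ⟨𝒳*⟩` with `f*(f) = ‖f‖` and `‖f*‖ ≤ K`. -/
theorem tail_estimate_implies_norming_functional
    {𝕜 : Type*} [RCLike 𝕜] {X : Type*} [NormedAddCommGroup X] [NormedSpace 𝕜 X]
    [CompleteSpace X] [TopologicalSpace.SeparableSpace X]
    (hinf : ¬ FiniteDimensional 𝕜 X)
    (x : ℕ → X) (xs : ℕ → X →L[𝕜] 𝕜)
    (hdense : Dense (Submodule.span 𝕜 (Set.range x) : Set X))
    (hbi : ∀ n k, xs n (x k) = if n = k then 1 else 0)
    (K : ℝ) (hK : 1 ≤ K)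
    (h : ∀ f ∈ Submodule.span 𝕜 (Set.range x), ∃ m : ℕ,
      ∀ g ∈ Submodule.span 𝕜 (x '' {n | m < n}), ‖f‖ ≤ K * ‖f + g‖) :
    ∀ f ∈ Submodule.span 𝕜 (Set.range x),
      ∃ fs ∈ Submodule.span 𝕜 (Set.range xs), fs f = (‖f‖ : 𝕜) ∧ ‖fs‖ ≤ K :=
  tail_estimate_implies_norming_functional_general x xs hdense hbi K hK h
end

section
/- Let 𝒳 be a fundamental minimal system for 𝕏 and K ≥ 1. Suppose that for each f in the linear span ⟨𝒳⟩ there exists f* in the linear span ⟨𝒳*⟩ of the dual system with f*(f) = ‖f‖ and ‖f*‖ ≤ K. Then for each f ∈ ⟨𝒳⟩ there is m(f) ∈ ℕ such that ‖f‖ ≤ K‖f + g‖ for every g in the linear span of 𝒳_{>m(f)}. -/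
open Filter

section TailAnnihilation

variable {𝕜 : Type*} [NontriviallyNormedField 𝕜] {X : Type*} [NormedAddCommGroup X]
  [NormedSpace 𝕜 X] {x : ℕ → X} {xs : ℕ → X →L[𝕜] 𝕜}

theorem eventually_apply_eq_zero_of_mem_span (hbi : ∀ n k, n < k → xs n (x k) = 0)
    {φ : X →L[𝕜] 𝕜} (hφ : φ ∈ Submodule.span 𝕜 (Set.range xs)) :
    ∀ᶠ k in atTop, φ (x k) = 0 := by
  induction hφ using Submodule.span_induction with
  | mem _ hmem =>
    obtain ⟨n, rfl⟩ := hmem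
    filter_upwards [eventually_gt_atTop n] with k hk using hbi n k hk
  | zero => exact Eventually.of_forall fun _ => rfl
  | add _ _ _ _ hφ hψ =>
    filter_upwards [hφ, hψ] with k hφk hψk
    simp [hφk, hψk]
  | smul c _ _ hφ =>
    filter_upwards [hφ] with k hφk
    simp [hφk]

theorem exists_span_tail_le_ker_of_mem_span (hbi : ∀ n k, n < k → xs n (x k) = 0)
    {φ : X →L[𝕜] 𝕜} (hφ : φ ∈ Submodule.span 𝕜 (Set.range xs)) :
    ∃ m : ℕ, Submodule.span 𝕜 (x '' {n | m < n}) ≤ LinearMap.ker (φ : X →ₗ[𝕜] 𝕜) := by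
  obtain ⟨m, hm⟩ := eventually_atTop.mp (eventually_apply_eq_zero_of_mem_span hbi hφ)
  refine ⟨m, Submodule.span_le.mpr ?_⟩
  rintro _ ⟨k, hk, rfl⟩
  exact hm k (le_of_lt hk)

end TailAnnihilation

theorem norm_le_mul_norm_add_of_apply_eq_norm {𝕜 : Type*} [RCLike 𝕜] {X : Type*}
    [NormedAddCommGroup X] [NormedSpace 𝕜 X] {φ : X →L[𝕜] 𝕜} {K : ℝ} {f g : X}
    (hφf : φ f = (‖f‖ : 𝕜)) (hφK : ‖φ‖ ≤ K) (hφg : φ g = 0) :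
    ‖f‖ ≤ K * ‖f + g‖ :=
  calc ‖f‖ = ‖φ (f + g)‖ := by simp [hφf, hφg]
    _ ≤ ‖φ‖ * ‖f + g‖ := φ.le_opNorm _
    _ ≤ K * ‖f + g‖ := by gcongr

theorem norming_functional_implies_tail_estimate_general
    {𝕜 : Type*} [RCLike 𝕜] {X : Type*} [NormedAddCommGroup X] [NormedSpace 𝕜 X]
    (x : ℕ → X) (xs : ℕ → X →L[𝕜] 𝕜)
    (hbi : ∀ n k, xs n (x k) = if n = k then 1 else 0)
    (K : ℝ)
    (h : ∀ f ∈ Submodule.span 𝕜 (Set.range x),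
      ∃ fs ∈ Submodule.span 𝕜 (Set.range xs), fs f = (‖f‖ : 𝕜) ∧ ‖fs‖ ≤ K) :
    ∀ f ∈ Submodule.span 𝕜 (Set.range x), ∃ m : ℕ,
      ∀ g ∈ Submodule.span 𝕜 (x '' {n | m < n}), ‖f‖ ≤ K * ‖f + g‖ := by
  intro f hf
  obtain ⟨fs, hfs, hfsf, hfsK⟩ := h f hf
  have hbi_lt : ∀ n k, n < k → xs n (x k) = 0 := fun n k hnk => by
    rw [hbi, if_neg hnk.ne]
  obtain ⟨m, hm⟩ := exists_span_tail_le_ker_of_mem_span hbi_lt hfs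
  exact ⟨m, fun g hg => norm_le_mul_norm_add_of_apply_eq_norm hfsf hfsK (hm hg)⟩

/-- If for each `f` in the span of `𝒳` there is `f* ∈ ⟨𝒳*⟩` with `f*(f) = ‖f‖`
and `‖f*‖ ≤ K`, then for each such `f` there is `m(f)` such that `‖f‖ ≤ K‖f + g‖` for every
`g` in the span of `𝒳_{>m(f)}`. -/
theorem norming_functional_implies_tail_estimate
    {𝕜 : Type*} [RCLike 𝕜] {X : Type*} [NormedAddCommGroup X] [NormedSpace 𝕜 X]
    [CompleteSpace X] [TopologicalSpace.SeparableSpace X]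
    (hinf : ¬ FiniteDimensional 𝕜 X)
    (x : ℕ → X) (xs : ℕ → X →L[𝕜] 𝕜)
    (hdense : Dense (Submodule.span 𝕜 (Set.range x) : Set X))
    (hbi : ∀ n k, xs n (x k) = if n = k then 1 else 0)
    (K : ℝ) (hK : 1 ≤ K)
    (h : ∀ f ∈ Submodule.span 𝕜 (Set.range x),
      ∃ fs ∈ Submodule.span 𝕜 (Set.range xs), fs f = (‖f‖ : 𝕜) ∧ ‖fs‖ ≤ K) :
    ∀ f ∈ Submodule.span 𝕜 (Set.range x), ∃ m : ℕ,
      ∀ g ∈ Submodule.span 𝕜 (x '' {n | m < n}), ‖f‖ ≤ K * ‖f + g‖ :=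
  norming_functional_implies_tail_estimate_general x xs hbi K h
end

section
/- Let 𝒳 be a fundamental minimal system for 𝕏 and K ≥ 1. Suppose the dual system 𝒳* is bounded (sup_n ‖x_n*‖ < ∞) and that for each f in the linear span ⟨𝒳⟩ there exist n(f) ∈ ℕ and δ(f) > 0 such that ‖f‖ ≤ K‖f + g‖ for every g in the linear span of 𝒳_{>n(f)} with ‖g‖_∞ < δ(f). Then for each f ∈ ⟨𝒳⟩ there is m(f) ∈ ℕ such that ‖f‖ ≤ K‖f + g‖ for every g in the linear span of 𝒳_{>m(f)}; consequently ⟨𝒳*⟩ is a K⁻¹-norming subspace of 𝕏*. -/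
/-!
If no tail `m` worked for `f`, there would be vectors `G m` in the span of `𝒳_{>m}` with
`K‖f + G m‖ < ‖f‖`. They are bounded, hence so are their coordinates (`𝒳*` is bounded), and a
subsequence of them has pairwise disjoint finite supports. The average of `N` such blocks stays in
the ball `‖f + ·‖ < ‖f‖ / K`, while its coordinates are `O(1/N)`, hence below `δ(f)`:
a contradiction.

The tail estimate says `‖f‖ ≤ K · dist(f, ⟨𝒳_{>m}⟩)`, so Hahn–Banach on the quotient by
`⟨𝒳_{>m}⟩` gives a functional of norm at most one, vanishing on `𝒳_{>m}` and of size at least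
`K⁻¹‖f‖` at `f`. By density and biorthogonality it equals `∑_{k ≤ m} φ(x_k) x_k*`, and density of
`⟨𝒳⟩` extends the lower bound from `⟨𝒳⟩` to all of `𝕏`.
-/

open Set Submodule Finset

theorem norm_le_div_add_of_mul_norm_add_lt {E : Type*} [SeminormedAddCommGroup E] {K : ℝ}
    (hK : 0 < K) {f g : E} (h : K * ‖f + g‖ < ‖f‖) : ‖g‖ ≤ ‖f‖ / K + ‖f‖ := by
  have htri := norm_sub_le (f + g) f
  rw [add_sub_cancel_left] at htri
  have hclose : ‖f + g‖ < ‖f‖ / K := by rw [lt_div_iff₀ hK, mul_comm]; exact h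
  linarith

theorem exists_subseq_support_disjoint {R : Type*} [Zero R] (c : ℕ → ℕ → R)
    (hlow : ∀ m j, j ≤ m → c m j = 0) (hfin : ∀ m, ∃ B, ∀ j, B ≤ j → c m j = 0) (n : ℕ) :
    ∃ ms : ℕ → ℕ, (∀ i, n ≤ ms i) ∧ ∀ j i i', c (ms i) j ≠ 0 → c (ms i') j ≠ 0 → i = i' := by
  choose B hB using hfin
  let ms : ℕ → ℕ := fun i => Nat.rec n (fun _ p => max (B p) (p + 1)) i
  have hsucc : ∀ i, ms (i + 1) = max (B (ms i)) (ms i + 1) := fun _ => rfl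
  have hmono : StrictMono ms := strictMono_nat_of_lt_succ fun i => by rw [hsucc]; omega
  have hsupp : ∀ i j, c (ms i) j ≠ 0 → ms i < j ∧ j < ms (i + 1) := fun i j hj =>
    ⟨lt_of_not_ge fun h => hj (hlow _ _ h),
      lt_of_not_ge fun h => hj (hB _ _ (by rw [hsucc] at h; omega))⟩
  refine ⟨ms, fun i => hmono.monotone (Nat.zero_le i), fun j i i' hi hi' => ?_⟩
  obtain ⟨hi₁, hi₂⟩ := hsupp i j hi
  obtain ⟨hi'₁, hi'₂⟩ := hsupp i' j hi'
  by_contra hne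
  rcases Nat.lt_or_gt_of_ne hne with h | h
  · have := hmono.monotone (show i + 1 ≤ i' by omega); omega
  · have := hmono.monotone (show i' + 1 ≤ i by omega); omega

theorem norm_sum_le_of_ne_zero_unique {ι E : Type*} [SeminormedAddCommGroup E] (s : Finset ι)
    (a : ι → E) {C : ℝ} (hC : 0 ≤ C) (ha : ∀ i, ‖a i‖ ≤ C)
    (huniq : ∀ i ∈ s, ∀ i' ∈ s, a i ≠ 0 → a i' ≠ 0 → i = i') : ‖∑ i ∈ s, a i‖ ≤ C := by
  by_cases h : ∃ i ∈ s, a i ≠ 0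
  · obtain ⟨i, hi, hai⟩ := h
    rw [sum_eq_single_of_mem i hi fun i' hi' hne =>
      not_not.1 fun hai' => hne (huniq i' hi' i hi hai' hai)]
    exact ha i
  · push Not at h
    rwa [sum_eq_zero h, norm_zero]

theorem norm_add_inv_smul_sum_range_lt {𝕜 E : Type*} [RCLike 𝕜] [SeminormedAddCommGroup E]
    [NormedSpace 𝕜 E] {N : ℕ} (hN : 0 < N) (f : E) (G : ℕ → E) {r : ℝ}
    (hG : ∀ i < N, ‖f + G i‖ < r) :
    ‖f + (N : 𝕜)⁻¹ • ∑ i ∈ range N, G i‖ < r := by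
  have hN' : (N : 𝕜) ≠ 0 := Nat.cast_ne_zero.2 hN.ne'
  have hNR : (0 : ℝ) < N := Nat.cast_pos.2 hN
  have havg : f + (N : 𝕜)⁻¹ • ∑ i ∈ range N, G i = (N : 𝕜)⁻¹ • ∑ i ∈ range N, (f + G i) := by
    rw [sum_add_distrib, sum_const, card_range, smul_add, ← Nat.cast_smul_eq_nsmul 𝕜,
      inv_smul_smul₀ hN']
  calc ‖f + (N : 𝕜)⁻¹ • ∑ i ∈ range N, G i‖
      = (N : ℝ)⁻¹ * ‖∑ i ∈ range N, (f + G i)‖ := by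
        rw [havg, norm_smul, norm_inv, RCLike.norm_natCast]
    _ ≤ (N : ℝ)⁻¹ * ∑ i ∈ range N, ‖f + G i‖ := by gcongr; exact norm_sum_le _ _
    _ < (N : ℝ)⁻¹ * ∑ _i ∈ range N, r := by
        refine mul_lt_mul_of_pos_left ?_ (by positivity)
        exact sum_lt_sum_of_nonempty (nonempty_range_iff.2 hN.ne') fun i hi =>
          hG i (mem_range.1 hi)
    _ = r := by rw [sum_const, card_range, nsmul_eq_mul, inv_mul_cancel_left₀ hNR.ne']

theorem Submodule.le_norm_mkQ_of_forall_le_norm_add {𝕜 E : Type*} [RCLike 𝕜]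
    [SeminormedAddCommGroup E] [NormedSpace 𝕜 E] {S : Submodule 𝕜 E} {v : E} {c : ℝ}
    (h : ∀ y ∈ S, c ≤ ‖v + y‖) : c ≤ ‖S.mkQ v‖ := by
  refine QuotientAddGroup.le_norm_iff.2 fun w hw => ?_
  have hwv : w - v ∈ S := (Submodule.Quotient.eq S).1 hw
  simpa using h _ hwv

section Biorthogonal

variable {𝕜 X : Type*} [RCLike 𝕜] [NormedAddCommGroup X] [NormedSpace 𝕜 X]
  {x : ℕ → X} {xs : ℕ → X →L[𝕜] 𝕜}

theorem coord_eq_zero_of_mem_span_tail (hbi : ∀ n k, xs n (x k) = if n = k then 1 else 0)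
    {m j : ℕ} (hj : j ≤ m) {g : X} (hg : g ∈ span 𝕜 (x '' {k | m < k})) : xs j g = 0 := by
  refine span_le (p := LinearMap.ker (xs j : X →ₗ[𝕜] 𝕜)).2 ?_ hg
  rintro - ⟨k, hk, rfl⟩
  simp only [SetLike.mem_coe, LinearMap.mem_ker, ContinuousLinearMap.coe_coe, hbi]
  exact if_neg (hj.trans_lt hk).ne

theorem exists_coord_eq_zero_of_mem_span (hbi : ∀ n k, xs n (x k) = if n = k then 1 else 0)
    {g : X} (hg : g ∈ span 𝕜 (range x)) : ∃ B, ∀ j, B ≤ j → xs j g = 0 := by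
  induction hg using span_induction with
  | mem v hv =>
    obtain ⟨k, rfl⟩ := hv
    exact ⟨k + 1, fun j hj => by rw [hbi, if_neg (by omega)]⟩
  | zero => exact ⟨0, fun j _ => map_zero _⟩
  | add u v _ _ hu hv =>
    obtain ⟨B₁, h₁⟩ := hu
    obtain ⟨B₂, h₂⟩ := hv
    exact ⟨max B₁ B₂, fun j hj => by
      rw [map_add, h₁ j (le_of_max_le_left hj), h₂ j (le_of_max_le_right hj), add_zero]⟩
  | smul a v _ hv =>
    obtain ⟨B, hB⟩ := hv
    exact ⟨B, fun j hj => by rw [map_smul, hB j hj, smul_zero]⟩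

theorem exists_tail_estimate_of_small_coord_tail_estimate
    (hbi : ∀ n k, xs n (x k) = if n = k then 1 else 0) {M : ℝ} (hM : ∀ n, ‖xs n‖ ≤ M)
    {K : ℝ} (hK : 0 < K) {f : X} {n : ℕ} {δ : ℝ} (hδ : 0 < δ)
    (hfg : ∀ g ∈ span 𝕜 (x '' {k | n < k}), (⨆ i, ‖xs i g‖) < δ → ‖f‖ ≤ K * ‖f + g‖) :
    ∃ m : ℕ, ∀ g ∈ span 𝕜 (x '' {k | m < k}), ‖f‖ ≤ K * ‖f + g‖ := by
  by_contra! hbad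
  choose G hGmem hGlt using hbad
  have hclose : ∀ m, ‖f + G m‖ < ‖f‖ / K := fun m => by
    rw [lt_div_iff₀ hK, mul_comm]; exact hGlt m
  set C := M * (‖f‖ / K + ‖f‖)
  have hM₀ : 0 ≤ M := (norm_nonneg _).trans (hM 0)
  have hC : 0 ≤ C := mul_nonneg hM₀ (by positivity)
  have hcoord : ∀ m j, ‖xs j (G m)‖ ≤ C := fun m j =>
    ((xs j).le_opNorm _).trans <| mul_le_mul (hM j)
      (norm_le_div_add_of_mul_norm_add_lt hK (hGlt m)) (norm_nonneg _) hM₀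
  obtain ⟨ms, hmsn, hdisj⟩ := exists_subseq_support_disjoint (fun m j => xs j (G m))
    (fun m _ hj => coord_eq_zero_of_mem_span_tail hbi hj (hGmem m))
    (fun m => exists_coord_eq_zero_of_mem_span hbi
      (span_mono (image_subset_range _ _) (hGmem m))) n
  obtain ⟨N, hN⟩ := exists_nat_gt (C / δ)
  have hNpos : 0 < N := by exact_mod_cast (div_nonneg hC hδ.le).trans_lt hN
  set g := (N : 𝕜)⁻¹ • ∑ i ∈ range N, G (ms i)
  have hgmem : g ∈ span 𝕜 (x '' {k | n < k}) :=
    smul_mem _ _ (sum_mem fun i _ =>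
      span_mono (image_mono fun k hk => (hmsn i).trans_lt hk) (hGmem (ms i)))
  have hgcoord : ∀ j, ‖xs j g‖ ≤ (N : ℝ)⁻¹ * C := fun j => by
    simp only [g, map_smul, map_sum, smul_eq_mul, norm_mul, norm_inv, RCLike.norm_natCast]
    exact mul_le_mul_of_nonneg_left (norm_sum_le_of_ne_zero_unique _ _ hC
      (fun i => hcoord (ms i) j) fun i _ i' _ => hdisj j i i') (by positivity)
  have hgsmall : (⨆ j, ‖xs j g‖) < δ := (ciSup_le hgcoord).trans_lt <| by
    rw [inv_mul_lt_iff₀ (Nat.cast_pos.2 hNpos)]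
    exact (div_lt_iff₀ hδ).1 hN
  have hfg_close : ‖f + g‖ < ‖f‖ / K :=
    norm_add_inv_smul_sum_range_lt hNpos f (G ∘ ms) fun i _ => hclose (ms i)
  have := hfg g hgmem hgsmall
  rw [lt_div_iff₀ hK] at hfg_close
  linarith

theorem eq_sum_smul_coord_of_apply_eq_zero (hdense : Dense (span 𝕜 (range x) : Set X))
    (hbi : ∀ n k, xs n (x k) = if n = k then 1 else 0) {φ : X →L[𝕜] 𝕜} {m : ℕ}
    (hφ : ∀ k, m < k → φ (x k) = 0) : φ = ∑ k ∈ range (m + 1), φ (x k) • xs k := by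
  refine ContinuousLinearMap.ext_on hdense ?_
  rintro - ⟨j, rfl⟩
  simp only [FunLike.coe_sum, Finset.sum_apply, FunLike.coe_smul,
    Pi.smul_apply, hbi, smul_eq_mul, mul_ite, mul_one, mul_zero, sum_ite_eq', Finset.mem_range]
  split_ifs with hj
  · rfl
  · exact hφ j (by omega)

theorem exists_norming_mem_span_coord_of_tail_estimate
    (hdense : Dense (span 𝕜 (range x) : Set X))
    (hbi : ∀ n k, xs n (x k) = if n = k then 1 else 0) {K : ℝ} (hK : 0 < K) {f : X} {m : ℕ}
    (hm : ∀ g ∈ span 𝕜 (x '' {k | m < k}), ‖f‖ ≤ K * ‖f + g‖) :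
    ∃ φ ∈ span 𝕜 (range xs), ‖φ‖ ≤ 1 ∧ K⁻¹ * ‖f‖ ≤ ‖φ f‖ := by
  set S := span 𝕜 (x '' {k | m < k})
  obtain ⟨G, hG, hGf⟩ := exists_dual_vector'' 𝕜 (S.mkQ f)
  have hmkQ : ‖S.mkQL‖ ≤ 1 := ContinuousLinearMap.opNorm_le_bound _ zero_le_one fun v => by
    simpa using Submodule.Quotient.norm_mk_le S v
  refine ⟨G.comp S.mkQL, ?_, ?_, ?_⟩
  · have hvanish : ∀ k, m < k → G.comp S.mkQL (x k) = 0 := fun k hk => by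
      simp [(Submodule.Quotient.mk_eq_zero S).2 (subset_span ⟨k, hk, rfl⟩)]
    rw [eq_sum_smul_coord_of_apply_eq_zero hdense hbi hvanish]
    exact sum_mem fun k _ => smul_mem _ _ (subset_span ⟨k, rfl⟩)
  · simpa using (G.opNorm_comp_le S.mkQL).trans (mul_le_one₀ hG (norm_nonneg _) hmkQ)
  · rw [ContinuousLinearMap.comp_apply, Submodule.coe_mkQL, hGf, RCLike.norm_ofReal, abs_norm]
    exact S.le_norm_mkQ_of_forall_le_norm_add fun g hg => (inv_mul_le_iff₀ hK).2 (hm g hg)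

end Biorthogonal

theorem le_sSup_norm_apply_of_dense {𝕜 X : Type*} [RCLike 𝕜] [SeminormedAddCommGroup X]
    [NormedSpace 𝕜 X] {Z : Set (X →L[𝕜] 𝕜)} {D : Set X} (hD : Dense D) {c : ℝ} (hc : 0 ≤ c)
    (hZ : ∀ f ∈ D, ∃ φ ∈ Z, ‖φ‖ ≤ 1 ∧ c * ‖f‖ ≤ ‖φ f‖) (f : X) :
    c * ‖f‖ ≤ sSup {r : ℝ | ∃ φ ∈ Z, ‖φ‖ ≤ 1 ∧ r = ‖φ f‖} := by
  have hbdd : BddAbove {r : ℝ | ∃ φ ∈ Z, ‖φ‖ ≤ 1 ∧ r = ‖φ f‖} := ⟨‖f‖, by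
    rintro - ⟨φ, -, hφ, rfl⟩
    exact (φ.le_of_opNorm_le hφ f).trans_eq (one_mul _)⟩
  refine le_of_forall_pos_le_add fun ε hε => ?_
  obtain ⟨f', hf'D, hff'⟩ := Metric.mem_closure_iff.1 (hD f) (ε / (c + 1)) (by positivity)
  obtain ⟨φ, hφZ, hφ, hφf'⟩ := hZ f' hf'D
  have hφf : ‖φ f‖ ≤ sSup {r : ℝ | ∃ φ ∈ Z, ‖φ‖ ≤ 1 ∧ r = ‖φ f‖} := le_csSup hbdd ⟨φ, hφZ, hφ, rfl⟩
  have hφdiff : ‖φ f'‖ ≤ ‖φ f‖ + ‖f - f'‖ := calc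
    ‖φ f'‖ ≤ ‖φ f‖ + ‖φ (f' - f)‖ := by rw [map_sub]; exact norm_le_norm_add_norm_sub' _ _
    _ ≤ ‖φ f‖ + ‖f - f'‖ := by
      rw [norm_sub_rev f]
      gcongr
      exact (φ.le_of_opNorm_le hφ _).trans_eq (one_mul _)
  have hff'c : c * ‖f‖ ≤ c * ‖f'‖ + c * ‖f - f'‖ := by
    rw [← mul_add]; exact mul_le_mul_of_nonneg_left (norm_le_norm_add_norm_sub' f f') hc
  rw [dist_eq_norm, lt_div_iff₀ (by positivity)] at hff'
  nlinarith [norm_nonneg (f - f')]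

theorem bounded_dual_small_coefficient_tail_estimate_general
    {𝕜 : Type*} [RCLike 𝕜] {X : Type*} [NormedAddCommGroup X] [NormedSpace 𝕜 X]
    (x : ℕ → X) (xs : ℕ → X →L[𝕜] 𝕜)
    (hdense : Dense (Submodule.span 𝕜 (Set.range x) : Set X))
    (hbi : ∀ n k, xs n (x k) = if n = k then 1 else 0)
    (K : ℝ) (hK : 1 ≤ K)
    (hxsb : ∃ M : ℝ, ∀ n, ‖xs n‖ ≤ M)
    (h : ∀ f ∈ Submodule.span 𝕜 (Set.range x), ∃ (n : ℕ) (δ : ℝ), 0 < δ ∧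
      ∀ g ∈ Submodule.span 𝕜 (x '' {k | n < k}),
        (⨆ i, ‖xs i g‖) < δ → ‖f‖ ≤ K * ‖f + g‖) :
    (∀ f ∈ Submodule.span 𝕜 (Set.range x), ∃ m : ℕ,
      ∀ g ∈ Submodule.span 𝕜 (x '' {n | m < n}), ‖f‖ ≤ K * ‖f + g‖) ∧
    (∀ f : X, K⁻¹ * ‖f‖ ≤
      sSup {r : ℝ | ∃ g ∈ Submodule.span 𝕜 (Set.range xs), ‖g‖ ≤ 1 ∧ r = ‖g f‖}) := by
  obtain ⟨M, hM⟩ := hxsb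
  have hK₀ : 0 < K := one_pos.trans_le hK
  have htail : ∀ f ∈ span 𝕜 (range x), ∃ m : ℕ,
      ∀ g ∈ span 𝕜 (x '' {n | m < n}), ‖f‖ ≤ K * ‖f + g‖ := fun f hf => by
    obtain ⟨n, δ, hδ, hfg⟩ := h f hf
    exact exists_tail_estimate_of_small_coord_tail_estimate hbi hM hK₀ hδ hfg
  refine ⟨htail, le_sSup_norm_apply_of_dense hdense (inv_nonneg.2 hK₀.le) fun f hf => ?_⟩
  obtain ⟨m, hm⟩ := htail f hf
  exact exists_norming_mem_span_coord_of_tail_estimate hdense hbi hK₀ hm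

/-- If `𝒳*` is bounded and for each `f` in the span of `𝒳` there are `n(f)` and
`δ(f) > 0` with `‖f‖ ≤ K‖f + g‖` for every `g` in the span of `𝒳_{>n(f)}` with `‖g‖_∞ < δ(f)`,
then for each `f` in the span of `𝒳` there is `m(f)` with `‖f‖ ≤ K‖f + g‖` for every `g` in the
span of `𝒳_{>m(f)}`; consequently `⟨𝒳*⟩` is a `K⁻¹`-norming subspace of `𝕏*`. -/
theorem bounded_dual_small_coefficient_tail_estimate
    {𝕜 : Type*} [RCLike 𝕜] {X : Type*} [NormedAddCommGroup X] [NormedSpace 𝕜 X]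
    [CompleteSpace X] [TopologicalSpace.SeparableSpace X]
    (hinf : ¬ FiniteDimensional 𝕜 X)
    (x : ℕ → X) (xs : ℕ → X →L[𝕜] 𝕜)
    (hdense : Dense (Submodule.span 𝕜 (Set.range x) : Set X))
    (hbi : ∀ n k, xs n (x k) = if n = k then 1 else 0)
    (K : ℝ) (hK : 1 ≤ K)
    (hxsb : ∃ M : ℝ, ∀ n, ‖xs n‖ ≤ M)
    (h : ∀ f ∈ Submodule.span 𝕜 (Set.range x), ∃ (n : ℕ) (δ : ℝ), 0 < δ ∧
      ∀ g ∈ Submodule.span 𝕜 (x '' {k | n < k}),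
        (⨆ i, ‖xs i g‖) < δ → ‖f‖ ≤ K * ‖f + g‖) :
    (∀ f ∈ Submodule.span 𝕜 (Set.range x), ∃ m : ℕ,
      ∀ g ∈ Submodule.span 𝕜 (x '' {n | m < n}), ‖f‖ ≤ K * ‖f + g‖) ∧
    (∀ f : X, K⁻¹ * ‖f‖ ≤
      sSup {r : ℝ | ∃ g ∈ Submodule.span 𝕜 (Set.range xs), ‖g‖ ≤ 1 ∧ r = ‖g f‖}) :=
  bounded_dual_small_coefficient_tail_estimate_general x xs hdense hbi K hK hxsb h
end

section
/- Let 𝒳 be a fundamental minimal system for 𝕏, let m ∈ ℕ, let 𝕏_{>m} be the closed linear span of 𝒳_{>m} = (x_n)_{n>m}, and regard 𝒳_{>m} as a fundamental minimal system for 𝕏_{>m} with dual system the restrictions (x_n*|_{𝕏_{>m}})_{n>m}. If K ≥ 1 and the linear span of (x_n*|_{𝕏_{>m}})_{n>m} is a K⁻¹-norming subspace of (𝕏_{>m})*, then there is K₀ ≥ K such that the linear span ⟨𝒳*⟩ of the dual system is a K₀⁻¹-norming subspace of 𝕏*. -/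
/-- If, for some `m`, the span of the restrictions `(x_n*|_{𝕏_{>m}})_{n>m}` is a
`K⁻¹`-norming subspace of `(𝕏_{>m})*`, where `𝕏_{>m}` is the closed linear span of `𝒳_{>m}`,
then there is `K₀ ≥ K` such that `⟨𝒳*⟩` is a `K₀⁻¹`-norming subspace of `𝕏*`. -/
theorem norming_inherited_from_tail_subspace
    {𝕜 : Type*} [RCLike 𝕜] {X : Type*} [NormedAddCommGroup X] [NormedSpace 𝕜 X]
    [CompleteSpace X] [TopologicalSpace.SeparableSpace X]
    (hinf : ¬ FiniteDimensional 𝕜 X)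
    (x : ℕ → X) (xs : ℕ → X →L[𝕜] 𝕜)
    (hdense : Dense (Submodule.span 𝕜 (Set.range x) : Set X))
    (hbi : ∀ n k, xs n (x k) = if n = k then 1 else 0)
    (m : ℕ) (K : ℝ) (hK : 1 ≤ K)
    (htail : ∀ f : (Submodule.span 𝕜 (x '' {n | m < n})).topologicalClosure,
      K⁻¹ * ‖f‖ ≤
        sSup {r : ℝ | ∃ g ∈ Submodule.span 𝕜
            (Set.range (fun n : {n : ℕ // m < n} =>
              (xs n).comp (Submodule.span 𝕜 (x '' {n | m < n})).topologicalClosure.subtypeL)),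
          ‖g‖ ≤ 1 ∧ r = ‖g f‖}) :
    ∃ K₀ : ℝ, K ≤ K₀ ∧ ∀ f : X, K₀⁻¹ * ‖f‖ ≤
      sSup {r : ℝ | ∃ g ∈ Submodule.span 𝕜 (Set.range xs), ‖g‖ ≤ 1 ∧ r = ‖g f‖} := by
  classical
  set Y := (Submodule.span 𝕜 (x '' {n | m < n})).topologicalClosure with hYdef
  set P : X →L[𝕜] X := ∑ n ∈ Finset.range (m+1), (xs n).smulRight (x n) with hPdef
  have hPapp : ∀ f, P f = ∑ n ∈ Finset.range (m+1), xs n f • x n := by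
    intro f; simp [hPdef]
  set Q : X →L[𝕜] X := ContinuousLinearMap.id 𝕜 X - P with hQdef
  have hQapp : ∀ f, Q f = f - P f := by intro f; simp [hQdef]
  -- Q on basis vectors
  have hPx_le : ∀ k, k ≤ m → P (x k) = x k := by
    intro k hk
    rw [hPapp]
    rw [Finset.sum_eq_single k]
    · simp [hbi]
    · intro n _ hn; simp [hbi, hn]
    · intro h; exact absurd (Finset.mem_range.2 (Nat.lt_succ_of_le hk)) h
  have hPx_gt : ∀ k, m < k → P (x k) = 0 := by
    intro k hk
    rw [hPapp]
    apply Finset.sum_eq_zero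
    intro n hn
    have : n ≠ k := by
      intro h; subst h; exact absurd (Finset.mem_range.1 hn) (by omega)
    simp [hbi, this]
  have hQx_le : ∀ k, k ≤ m → Q (x k) = 0 := by
    intro k hk; rw [hQapp, hPx_le k hk]; simp
  have hQx_gt : ∀ k, m < k → Q (x k) = x k := by
    intro k hk; rw [hQapp, hPx_gt k hk]; simp
  -- Q maps into Y
  have hQmem : ∀ f : X, Q f ∈ Y := by
    have hYclosed : IsClosed (Y : Set X) := by
      rw [hYdef]; exact Submodule.isClosed_topologicalClosure _
    have hclosed : IsClosed (Q ⁻¹' (Y : Set X)) :=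
      hYclosed.preimage Q.continuous
    have hsub : (Submodule.span 𝕜 (Set.range x) : Set X) ⊆ Q ⁻¹' (Y : Set X) := by
      intro f hf
      have : f ∈ Submodule.comap (Q : X →ₗ[𝕜] X) Y := by
        refine Submodule.span_le.2 ?_ hf
        rintro _ ⟨k, rfl⟩
        show Q _ ∈ Y
        rcases le_or_gt k m with hk | hk
        · rw [hQx_le k hk]; exact Y.zero_mem
        · rw [hQx_gt k hk]
          exact Submodule.le_topologicalClosure _
            (Submodule.subset_span ⟨k, hk, rfl⟩)
      exact this
    intro f
    have : (Set.univ : Set X) ⊆ Q ⁻¹' (Y : Set X) := by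
      rw [← hdense.closure_eq] at *
      calc closure (Submodule.span 𝕜 (Set.range x) : Set X)
          ⊆ closure (Q ⁻¹' (Y : Set X)) := closure_mono hsub
        _ = Q ⁻¹' (Y : Set X) := hclosed.closure_eq
    exact this (Set.mem_univ f)
  set Qc : X →L[𝕜] Y := Q.codRestrict Y hQmem with hQcdef
  have hQcapp : ∀ f, (Qc f : X) = Q f := fun f => rfl
  set Ψ : (X →L[𝕜] 𝕜) →ₗ[𝕜] (Y →L[𝕜] 𝕜) :=
    { toFun := fun h => h.comp Y.subtypeL
      map_add' := by intro a b; ext z; simp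
      map_smul' := by intro c a; ext z; simp } with hΨdef
  have hrange : (Set.range (fun n : {n : ℕ // m < n} => (xs n).comp Y.subtypeL))
      = Ψ '' (Set.range (fun n : {n : ℕ // m < n} => xs n)) := by
    rw [← Set.range_comp]; rfl
  have hHex : ∀ g ∈ Submodule.span 𝕜
      (Set.range (fun n : {n : ℕ // m < n} => (xs n).comp Y.subtypeL)),
      ∃ H ∈ Submodule.span 𝕜 (Set.range (fun n : {n : ℕ // m < n} => xs (n : ℕ))),
        H.comp Y.subtypeL = g := by
    intro g hg
    rw [hrange, Submodule.span_image] at hg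
    rcases Submodule.mem_map.1 hg with ⟨H, hH, hHg⟩
    exact ⟨H, hH, hHg⟩
  have hHzero : ∀ H ∈ Submodule.span 𝕜
      (Set.range (fun n : {n : ℕ // m < n} => xs (n : ℕ))),
      ∀ k ≤ m, H (x k) = 0 := by
    intro H hH k hk
    induction hH using Submodule.span_induction with
    | mem h hmem =>
      rcases hmem with ⟨n, rfl⟩
      have : (n : ℕ) ≠ k := by have := n.2; omega
      simp [hbi, this]
    | zero => simp
    | add a b _ _ ha hb => simp [ha, hb]
    | smul c a _ ha => simp [ha]
  have hHcomp : ∀ (g : Y →L[𝕜] 𝕜)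
      (H : X →L[𝕜] 𝕜), H ∈ Submodule.span 𝕜
        (Set.range (fun n : {n : ℕ // m < n} => xs (n : ℕ))) →
      H.comp Y.subtypeL = g → H = g.comp Qc := by
    intro g H hH hHg
    apply ContinuousLinearMap.ext_on hdense
    rintro _ ⟨k, rfl⟩
    rcases le_or_gt k m with hk | hk
    · have h1 : H (x k) = 0 := hHzero H hH k hk
      have h2 : Qc (x k) = 0 := by
        apply Subtype.ext
        rw [hQcapp, hQx_le k hk]; rfl
      simp [ContinuousLinearMap.comp_apply, h1, h2]
    · have h2 : (Qc (x k) : X) = x k := by rw [hQcapp, hQx_gt k hk]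
      have : g (Qc (x k)) = H ((Qc (x k) : X)) := by
        rw [← hHg]; rfl
      simp only [ContinuousLinearMap.comp_apply]
      rw [this, h2]
  -- the norming sets
  set S : X → Set ℝ := fun f =>
    {r : ℝ | ∃ g ∈ Submodule.span 𝕜 (Set.range xs), ‖g‖ ≤ 1 ∧ r = ‖g f‖} with hSdef
  have hS0 : ∀ f, (0 : ℝ) ∈ S f := by
    intro f
    exact ⟨0, Submodule.zero_mem _, by simp, by simp⟩
  have hSbdd : ∀ f, BddAbove (S f) := by
    intro f
    refine ⟨‖f‖, ?_⟩
    rintro r ⟨g, hg, hg1, rfl⟩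
    calc ‖g f‖ ≤ ‖g‖ * ‖f‖ := g.le_opNorm f
      _ ≤ 1 * ‖f‖ := by gcongr
      _ = ‖f‖ := one_mul _
  have hSnonneg : ∀ f, 0 ≤ sSup (S f) := fun f => le_csSup (hSbdd f) (hS0 f)
  have hxs_pos : ∀ n, 0 < ‖xs n‖ := by
    intro n
    have h1 : xs n (x n) = 1 := by simp [hbi]
    have h2 : (1 : ℝ) ≤ ‖xs n‖ * ‖x n‖ := by
      calc (1 : ℝ) = ‖xs n (x n)‖ := by rw [h1]; simp
        _ ≤ ‖xs n‖ * ‖x n‖ := (xs n).le_opNorm _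
    by_contra h
    push_neg at h
    have h3 : ‖xs n‖ * ‖x n‖ ≤ 0 * ‖x n‖ :=
      mul_le_mul_of_nonneg_right h (norm_nonneg _)
    rw [zero_mul] at h3
    linarith
  have hcoord : ∀ n f, ‖xs n f‖ ≤ ‖xs n‖ * sSup (S f) := by
    intro n f
    have hnc : ‖(((‖xs n‖ : ℝ) : 𝕜))⁻¹‖ = ‖xs n‖⁻¹ := by
      rw [norm_inv, RCLike.norm_ofReal, abs_of_nonneg (norm_nonneg (xs n))]
    have hmem : (‖xs n‖⁻¹ * ‖xs n f‖) ∈ S f := by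
      refine ⟨((‖xs n‖ : ℝ) : 𝕜)⁻¹ • xs n,
        Submodule.smul_mem _ _ (Submodule.subset_span ⟨n, rfl⟩), ?_, ?_⟩
      · calc ‖(((‖xs n‖ : ℝ) : 𝕜))⁻¹ • xs n‖
            ≤ ‖(((‖xs n‖ : ℝ) : 𝕜))⁻¹‖ * ‖xs n‖ :=
              ContinuousLinearMap.opNorm_smul_le _ _
          _ = ‖xs n‖⁻¹ * ‖xs n‖ := by rw [hnc]
          _ = 1 := inv_mul_cancel₀ (hxs_pos n).ne'
      · calc ‖xs n‖⁻¹ * ‖xs n f‖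
            = ‖(((‖xs n‖ : ℝ) : 𝕜))⁻¹‖ * ‖xs n f‖ := by rw [hnc]
          _ = ‖(((‖xs n‖ : ℝ) : 𝕜))⁻¹ • xs n f‖ := (norm_smul _ _).symm
          _ = ‖((((‖xs n‖ : ℝ) : 𝕜))⁻¹ • xs n) f‖ := by
              rw [ContinuousLinearMap.smul_apply]
    have := le_csSup (hSbdd f) hmem
    exact (inv_mul_le_iff₀ (hxs_pos n)).1 this
  set M : ℝ := max ‖Qc‖ 1 with hMdef
  have hM1 : 1 ≤ M := le_max_right _ _
  have hM0 : 0 < M := lt_of_lt_of_le one_pos hM1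
  -- tail sup bound
  have htailbound : ∀ f : X,
      sSup {r : ℝ | ∃ g ∈ Submodule.span 𝕜
            (Set.range (fun n : {n : ℕ // m < n} =>
              (xs n).comp Y.subtypeL)),
          ‖g‖ ≤ 1 ∧ r = ‖g (Qc f)‖} ≤ M * sSup (S f) := by
    intro f
    refine csSup_le ?_ ?_
    · refine ⟨0, 0, Submodule.zero_mem _, ?_, ?_⟩
      · rw [ContinuousLinearMap.opNorm_zero]; exact zero_le_one
      · rw [ContinuousLinearMap.zero_apply, norm_zero]
    rintro r ⟨g, hg, hg1, rfl⟩
    rcases hHex g hg with ⟨H, hH, hHg⟩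
    have hHeq : H = g.comp Qc := hHcomp g H hH hHg
    have hHnorm : ‖H‖ ≤ M := by
      rw [hHeq]
      calc ‖g.comp Qc‖ ≤ ‖g‖ * ‖Qc‖ := ContinuousLinearMap.opNorm_comp_le _ _
        _ ≤ 1 * M := by
            exact mul_le_mul hg1 (le_max_left _ _)
              (ContinuousLinearMap.opNorm_nonneg _) zero_le_one
        _ = M := one_mul _
    have hmem : (M⁻¹ * ‖g (Qc f)‖) ∈ S f := by
      refine ⟨((M : ℝ) : 𝕜)⁻¹ • H, ?_, ?_, ?_⟩
      · refine Submodule.smul_mem _ _ ?_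
        refine Submodule.span_mono ?_ hH
        rintro _ ⟨n, rfl⟩
        exact ⟨(n : ℕ), rfl⟩
      · have hmc : ‖(((M : ℝ) : 𝕜))⁻¹‖ = M⁻¹ := by
          rw [norm_inv, RCLike.norm_ofReal, abs_of_pos hM0]
        calc ‖(((M : ℝ) : 𝕜))⁻¹ • H‖ ≤ ‖(((M : ℝ) : 𝕜))⁻¹‖ * ‖H‖ :=
              ContinuousLinearMap.opNorm_smul_le _ _
          _ = M⁻¹ * ‖H‖ := by rw [hmc]
          _ ≤ M⁻¹ * M := by
              exact mul_le_mul_of_nonneg_left hHnorm (inv_nonneg.2 hM0.le)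
          _ = 1 := inv_mul_cancel₀ hM0.ne'
      · have hmc : ‖(((M : ℝ) : 𝕜))⁻¹‖ = M⁻¹ := by
          rw [norm_inv, RCLike.norm_ofReal, abs_of_pos hM0]
        have hHf : H f = g (Qc f) := by rw [hHeq]; rfl
        calc M⁻¹ * ‖g (Qc f)‖ = ‖(((M : ℝ) : 𝕜))⁻¹‖ * ‖H f‖ := by rw [hmc, hHf]
          _ = ‖(((M : ℝ) : 𝕜))⁻¹ • H f‖ := (norm_smul _ _).symm
          _ = ‖((((M : ℝ) : 𝕜))⁻¹ • H) f‖ := by rw [ContinuousLinearMap.smul_apply]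
    have := le_csSup (hSbdd f) hmem
    exact (inv_mul_le_iff₀ hM0).1 this
  have hK0 : 0 < K := lt_of_lt_of_le one_pos hK
  have hQnorm : ∀ f : X, ‖Q f‖ ≤ K * (M * sSup (S f)) := by
    intro f
    have h1 := htail (Qc f)
    have h2 := htailbound f
    have hnorm : ‖Qc f‖ = ‖Q f‖ := rfl
    have := h1.trans h2
    rw [hnorm] at this
    calc ‖Q f‖ = K * (K⁻¹ * ‖Q f‖) := by field_simp
      _ ≤ K * (M * sSup (S f)) := mul_le_mul_of_nonneg_left this hK0.le
  set C : ℝ := ∑ n ∈ Finset.range (m+1), ‖xs n‖ * ‖x n‖ with hCdef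
  have hC0 : 0 ≤ C := Finset.sum_nonneg fun n _ =>
    mul_nonneg (norm_nonneg _) (norm_nonneg _)
  have hPnorm : ∀ f : X, ‖P f‖ ≤ C * sSup (S f) := by
    intro f
    rw [hPapp, hCdef, Finset.sum_mul]
    calc ‖∑ n ∈ Finset.range (m+1), xs n f • x n‖
        ≤ ∑ n ∈ Finset.range (m+1), ‖xs n f • x n‖ := norm_sum_le _ _
      _ ≤ ∑ n ∈ Finset.range (m+1), ‖xs n‖ * ‖x n‖ * sSup (S f) := by
          apply Finset.sum_le_sum
          intro n _
          rw [norm_smul]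
          calc ‖xs n f‖ * ‖x n‖ ≤ (‖xs n‖ * sSup (S f)) * ‖x n‖ :=
                mul_le_mul_of_nonneg_right (hcoord n f) (norm_nonneg _)
            _ = ‖xs n‖ * ‖x n‖ * sSup (S f) := by ring
  refine ⟨C + K * M, ?_, ?_⟩
  · calc K = K * 1 := (mul_one K).symm
      _ ≤ K * M := mul_le_mul_of_nonneg_left hM1 hK0.le
      _ ≤ C + K * M := le_add_of_nonneg_left hC0
  · intro f
    have hK₀0 : 0 < C + K * M := by positivity
    rw [inv_mul_le_iff₀ hK₀0]
    have hsplit : f = P f + Q f := by rw [hQapp]; abel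
    calc ‖f‖ = ‖P f + Q f‖ := by rw [← hsplit]
      _ ≤ ‖P f‖ + ‖Q f‖ := norm_add_le _ _
      _ ≤ C * sSup (S f) + K * (M * sSup (S f)) :=
          add_le_add (hPnorm f) (hQnorm f)
      _ = (C + K * M) * sSup (S f) := by ring
end

section
/- Let 𝒳 be a fundamental minimal system for 𝕏 whose dual system 𝒳* is bounded (sup_n ‖x_n*‖ < ∞). If the linear span ⟨𝒳*⟩ is not a norming subspace of 𝕏*, then for every ε > 0, r > 0 and m ∈ ℕ there exists f ∈ 𝕏 with the following properties: (i) f belongs to the linear span of 𝒳_{>m} and ‖f‖ = r; (ii) ‖f‖_∞ < ε; (iii) for each n > m and each δ > 0 there is g in the linear span of 𝒳_{>n} with ‖g‖_∞ < δ and ‖f + g‖ < ε. -/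
/-!
Write `θ f = sup {‖g f‖ : g ∈ ⟨𝒳*⟩, ‖g‖ ≤ 1}`. This is a seminorm with `θ ≤ ‖·‖` and
`‖x_i* f‖ ≤ ‖x_i*‖ θ f`, and `⟨𝒳*⟩` being non-norming says that `θ u / ‖u‖` can be arbitrarily
small. By Hahn–Banach the distance from `f` to `⟨𝒳_{>q}⟩` is at most `θ f`: a functional of norm
`≤ 1` vanishing on `𝒳_{>q}` agrees on the dense span `⟨𝒳⟩` with `∑_{k ≤ q} φ (x_k) x_k*`, so it
lies in `⟨𝒳*⟩`. Hence a vector with small `θ` can be moved into `⟨𝒳_{>m}⟩` and rescaled to norm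
`r`, which gives (i) and (ii).

For (iii), approximate `f` to within `ε` by vectors `H_0, H_1, …` spanned by consecutive disjoint
blocks of `𝒳_{>n}`, and take `g = -(H_0 + ⋯ + H_{p-1}) / p`. Then `f + g` is the average of the
`f - H_j`, of norm `< ε`, while every coordinate functional sees at most one block, so
`‖x_i* g‖ ≤ M (‖f‖ + ε) / p`, where `M` bounds the `‖x_i*‖`.
-/

open Function Metric Set Submodule

section NormedSpace

variable {𝕜 : Type*} [RCLike 𝕜] {X : Type*} [SeminormedAddCommGroup X] [NormedSpace 𝕜 X]

lemma Seminorm.exists_norm_smul_eq_lt_mul (p : Seminorm 𝕜 X) {v : X} {c r : ℝ}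
    (hv : p v < c * ‖v‖) (hr : 0 < r) : ∃ a : 𝕜, ‖a • v‖ = r ∧ p (a • v) < c * r := by
  have hv0 : 0 < ‖v‖ := (norm_nonneg v).lt_of_ne fun h => by
    simpa [← h] using (apply_nonneg p v).trans_lt hv
  refine ⟨((r / ‖v‖ : ℝ) : 𝕜), ?_, ?_⟩
  · rw [norm_smul, RCLike.norm_ofReal, abs_of_pos (div_pos hr hv0), div_mul_cancel₀ _ hv0.ne']
  · rw [map_smul_eq_mul, RCLike.norm_ofReal, abs_of_pos (div_pos hr hv0)]
    calc r / ‖v‖ * p v < r / ‖v‖ * (c * ‖v‖) := mul_lt_mul_of_pos_left hv (div_pos hr hv0)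
      _ = c * r := by field_simp

lemma norm_inv_natCast_smul_sum_lt {p : ℕ} (hp : 0 < p) {v : ℕ → X} {e : ℝ}
    (hv : ∀ j, ‖v j‖ < e) : ‖(p : 𝕜)⁻¹ • ∑ j ∈ Finset.range p, v j‖ < e := by
  rw [norm_smul, norm_inv, RCLike.norm_natCast, inv_mul_lt_iff₀ (Nat.cast_pos.mpr hp)]
  calc ‖∑ j ∈ Finset.range p, v j‖ ≤ ∑ j ∈ Finset.range p, ‖v j‖ := norm_sum_le _ _
    _ < ∑ _j ∈ Finset.range p, e :=
      Finset.sum_lt_sum_of_nonempty (Finset.nonempty_range_iff.mpr hp.ne') fun j _ => hv j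
    _ = p * e := by rw [Finset.sum_const, Finset.card_range, nsmul_eq_mul]

end NormedSpace

section NormingSeminorm

variable {𝕜 : Type*} [NontriviallyNormedField 𝕜] {X : Type*} [SeminormedAddCommGroup X]
  [NormedSpace 𝕜 X] (Z : Submodule 𝕜 (X →L[𝕜] 𝕜))

lemma bddAbove_norm_apply_unitBall (f : X) :
    BddAbove {r : ℝ | ∃ g ∈ Z, ‖g‖ ≤ 1 ∧ r = ‖g f‖} := by
  refine ⟨‖f‖, ?_⟩
  rintro _ ⟨g, -, hg, rfl⟩
  simpa using g.le_of_opNorm_le hg f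

lemma norm_apply_le_sSup_unitBall {g : X →L[𝕜] 𝕜} (hg : g ∈ Z) (hg1 : ‖g‖ ≤ 1) (f : X) :
    ‖g f‖ ≤ sSup {r : ℝ | ∃ g ∈ Z, ‖g‖ ≤ 1 ∧ r = ‖g f‖} :=
  le_csSup (bddAbove_norm_apply_unitBall Z f) ⟨g, hg, hg1, rfl⟩

lemma sSup_unitBall_norm_apply_le {f : X} {c : ℝ} (h : ∀ g ∈ Z, ‖g‖ ≤ 1 → ‖g f‖ ≤ c) :
    sSup {r : ℝ | ∃ g ∈ Z, ‖g‖ ≤ 1 ∧ r = ‖g f‖} ≤ c :=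
  csSup_le ⟨0, 0, Z.zero_mem, by simp, by simp⟩ fun _ ⟨g, hg, hg1, hr⟩ => hr ▸ h g hg hg1

noncomputable def normingSeminorm : Seminorm 𝕜 X :=
  .ofSMulLE (fun f => sSup {r : ℝ | ∃ g ∈ Z, ‖g‖ ≤ 1 ∧ r = ‖g f‖})
    (le_antisymm (sSup_unitBall_norm_apply_le Z fun g _ _ => by simp)
      (by simpa using norm_apply_le_sSup_unitBall Z Z.zero_mem (by simp) 0))
    (fun f f' => sSup_unitBall_norm_apply_le Z fun g hg hg1 => by
      rw [map_add]
      exact (norm_add_le _ _).trans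
        (add_le_add (norm_apply_le_sSup_unitBall Z hg hg1 f)
          (norm_apply_le_sSup_unitBall Z hg hg1 f')))
    (fun a f => sSup_unitBall_norm_apply_le Z fun g hg hg1 => by
      rw [map_smul, norm_smul]
      exact mul_le_mul_of_nonneg_left (norm_apply_le_sSup_unitBall Z hg hg1 f) (norm_nonneg a))

variable {Z}

lemma norm_apply_le_normingSeminorm {g : X →L[𝕜] 𝕜} (hg : g ∈ Z) (hg1 : ‖g‖ ≤ 1) (f : X) :
    ‖g f‖ ≤ normingSeminorm Z f :=
  norm_apply_le_sSup_unitBall Z hg hg1 f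

lemma normingSeminorm_le_norm (f : X) : normingSeminorm Z f ≤ ‖f‖ :=
  sSup_unitBall_norm_apply_le Z fun g _ hg1 => by simpa using g.le_of_opNorm_le hg1 f

end NormingSeminorm

section RCLike

variable {𝕜 : Type*} [RCLike 𝕜] {X : Type*} [SeminormedAddCommGroup X] [NormedSpace 𝕜 X]
  {Z : Submodule 𝕜 (X →L[𝕜] 𝕜)}

lemma norm_apply_le_norm_mul_normingSeminorm {g : X →L[𝕜] 𝕜} (hg : g ∈ Z) (f : X) :
    ‖g f‖ ≤ ‖g‖ * normingSeminorm Z f := by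
  rcases (norm_nonneg g).eq_or_lt with h0 | h0
  · simpa [← h0] using g.le_opNorm f
  have hunit : ‖((‖g‖⁻¹ : ℝ) : 𝕜) • g‖ ≤ 1 := by
    rw [norm_smul, RCLike.norm_ofReal, abs_inv, abs_norm, inv_mul_cancel₀ h0.ne']
  have := norm_apply_le_normingSeminorm (Z.smul_mem _ hg) hunit f
  rwa [smul_apply, norm_smul, RCLike.norm_ofReal, abs_inv, abs_norm,
    inv_mul_le_iff₀ h0] at this

lemma infDist_le_normingSeminorm {Y : Submodule 𝕜 X}
    (hY : ∀ φ : X →L[𝕜] 𝕜, (∀ y ∈ Y, φ y = 0) → φ ∈ Z) (f : X) :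
    infDist f Y ≤ normingSeminorm Z f := by
  obtain ⟨g, hg1, hgf⟩ := exists_dual_vector'' 𝕜 (Y.mkQ f)
  have hφ1 : ‖g.comp Y.mkQL‖ ≤ 1 :=
    (g.comp Y.mkQL).opNorm_le_bound zero_le_one fun v => by
      simpa using (g.le_of_opNorm_le hg1 _).trans (by simpa using Submodule.Quotient.norm_mk_le Y v)
  have hφY : ∀ y ∈ Y, g.comp Y.mkQL y = 0 := fun y hy => by
    simp [(Submodule.Quotient.mk_eq_zero Y).mpr hy]
  have := norm_apply_le_normingSeminorm (hY _ hφY) hφ1 f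
  rw [ContinuousLinearMap.comp_apply, Submodule.mkQL_apply, hgf, RCLike.norm_ofReal, abs_norm,
    Submodule.mkQ_apply] at this
  exact (QuotientAddGroup.norm_mk (S := Y.toAddSubgroup) f).symm.le.trans this

end RCLike

section Biorthogonal

variable {𝕜 : Type*} [RCLike 𝕜] {X : Type*} [SeminormedAddCommGroup X] [NormedSpace 𝕜 X]
  {x : ℕ → X} {xs : ℕ → X →L[𝕜] 𝕜}

lemma exists_mem_span_image_Ioc {q : ℕ} {h : X} (hh : h ∈ span 𝕜 (x '' Ioi q)) :
    ∃ N, q < N ∧ h ∈ span 𝕜 (x '' Ioc q N) := by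
  rw [← iUnion_Ioc_right, image_iUnion, span_iUnion,
    mem_iSup_of_directed _ (Monotone.directed_le fun _ _ hN =>
      span_mono (image_mono (Ioc_subset_Ioc_right hN)))] at hh
  obtain ⟨N, hN⟩ := hh
  exact ⟨max N (q + 1), by omega,
    span_mono (image_mono (Ioc_subset_Ioc_right (le_max_left _ _))) hN⟩

variable (hbi : ∀ n k, xs n (x k) = if n = k then 1 else 0)
include hbi

lemma apply_eq_zero_of_mem_span_image {S : Set ℕ} {h : X} (hh : h ∈ span 𝕜 (x '' S)) {i : ℕ}
    (hi : i ∉ S) : xs i h = 0 := by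
  have : span 𝕜 (x '' S) ≤ LinearMap.ker (xs i : X →ₗ[𝕜] 𝕜) := span_le.mpr <| by
    rintro _ ⟨k, hk, rfl⟩
    simp [hbi, ne_of_mem_of_not_mem hk hi |>.symm]
  exact this hh

lemma norm_apply_sum_le_of_pairwise_disjoint {S : ℕ → Set ℕ} (hS : Pairwise (Disjoint on S))
    {H : ℕ → X} (hH : ∀ j, H j ∈ span 𝕜 (x '' S j)) (s : Finset ℕ) (i : ℕ) {B : ℝ}
    (hB0 : 0 ≤ B) (hB : ∀ j, ‖xs i (H j)‖ ≤ B) : ‖xs i (∑ j ∈ s, H j)‖ ≤ B := by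
  rw [map_sum]
  by_cases hi : ∃ j, i ∈ S j
  · obtain ⟨j, hj⟩ := hi
    have hsingle : ∀ b, xs i (H b) = if b = j then xs i (H j) else 0 := fun b => by
      split_ifs with hbj
      · rw [hbj]
      · exact apply_eq_zero_of_mem_span_image hbi (hH b)
          fun hib => Set.disjoint_left.mp (hS hbj) hib hj
    rw [Finset.sum_congr rfl fun b _ => hsingle b, Finset.sum_ite_eq']
    split_ifs
    exacts [hB j, by simpa using hB0]
  · rw [Finset.sum_eq_zero fun b _ =>
      apply_eq_zero_of_mem_span_image hbi (hH b) fun hib => hi ⟨b, hib⟩]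
    simpa using hB0

variable (hdense : Dense (span 𝕜 (range x) : Set X))
include hdense

lemma mem_span_range_of_apply_eq_zero {q : ℕ} {φ : X →L[𝕜] 𝕜} (hφ : ∀ k, q < k → φ (x k) = 0) :
    φ ∈ span 𝕜 (range xs) := by
  have hφ_eq : φ = ∑ k ∈ Finset.range (q + 1), φ (x k) • xs k := by
    refine ContinuousLinearMap.ext_on hdense ?_
    rintro _ ⟨j, rfl⟩
    by_cases hj : j ≤ q
    · simp [hbi, Nat.lt_succ_of_le hj]
    · simp [hbi, hφ j (by omega), show ¬ j < q + 1 by omega]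
  rw [hφ_eq]
  exact sum_mem fun k _ => smul_mem _ _ (subset_span ⟨k, rfl⟩)

lemma exists_mem_span_image_Ioc_norm_sub_lt {f : X} {e : ℝ}
    (hf : normingSeminorm (span 𝕜 (range xs)) f < e) (q : ℕ) :
    ∃ N, q < N ∧ ∃ h ∈ span 𝕜 (x '' Ioc q N), ‖f - h‖ < e := by
  have hdist : infDist f (span 𝕜 (x '' Ioi q) : Set X) < e :=
    (infDist_le_normingSeminorm (fun φ hφ => mem_span_range_of_apply_eq_zero hbi hdense
      fun k hk => hφ _ (subset_span (mem_image_of_mem x hk))) f).trans_lt hf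
  obtain ⟨h, hh, hfh⟩ := (infDist_lt_iff ⟨0, zero_mem _⟩).mp hdist
  obtain ⟨N, hqN, hN⟩ := exists_mem_span_image_Ioc hh
  exact ⟨N, hqN, h, hN, by rwa [← dist_eq_norm]⟩

lemma exists_mem_span_image_Ioi_norm_eq_normingSeminorm_lt
    (hflat : ∀ c : ℝ, 0 < c → c ≤ 1 → ∃ u : X, normingSeminorm (span 𝕜 (range xs)) u < c * ‖u‖)
    (q : ℕ) {r η : ℝ} (hr : 0 < r) (hη : 0 < η) :
    ∃ f ∈ span 𝕜 (x '' Ioi q), ‖f‖ = r ∧ normingSeminorm (span 𝕜 (range xs)) f < η := by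
  set θ := normingSeminorm (span 𝕜 (range xs))
  -- `c ≤ 1 / 2` keeps `‖h‖ ≥ ‖u‖ / 2`; `4 c ≤ η / r` absorbs the rescaling to norm `r`.
  set c := min (1 / 2) (η / r / 4)
  have hc0 : 0 < c := lt_min (by norm_num) (by positivity)
  obtain ⟨u, hu⟩ := hflat c hc0 ((min_le_left _ _).trans (by norm_num))
  obtain ⟨N, -, h, hh, huh⟩ := exists_mem_span_image_Ioc_norm_sub_lt hbi hdense hu q
  have hθh : θ h < 2 * c * ‖u‖ := by
    have := normingSeminorm_le_norm (Z := span 𝕜 (range xs)) (h - u)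
    rw [norm_sub_rev] at this
    linarith [le_map_add_map_sub θ h u]
  have hu_le : ‖u‖ ≤ 2 * ‖h‖ := by
    have := norm_le_norm_add_norm_sub h u
    have : c * ‖u‖ ≤ 1 / 2 * ‖u‖ :=
      mul_le_mul_of_nonneg_right (min_le_left _ _ : c ≤ 1 / 2) (norm_nonneg u)
    rw [norm_sub_rev] at huh
    linarith
  have hc : 4 * c ≤ η / r := by
    have : c ≤ η / r / 4 := min_le_right _ _
    linarith
  have hθh' : θ h < η / r * ‖h‖ := calc
    θ h < 2 * c * ‖u‖ := hθh
    _ ≤ 2 * c * (2 * ‖h‖) := mul_le_mul_of_nonneg_left hu_le (by positivity)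
    _ = 4 * c * ‖h‖ := by ring
    _ ≤ η / r * ‖h‖ := mul_le_mul_of_nonneg_right hc (norm_nonneg h)
  obtain ⟨a, har, hθa⟩ := θ.exists_norm_smul_eq_lt_mul hθh' hr
  exact ⟨a • h, smul_mem _ _ (span_mono (image_mono Ioc_subset_Ioi_self) hh), har,
    by rwa [div_mul_cancel₀ _ hr.ne'] at hθa⟩

lemma exists_strictMono_blocks_norm_sub_lt {f : X} {e : ℝ}
    (hf : normingSeminorm (span 𝕜 (range xs)) f < e) (n : ℕ) :
    ∃ N : ℕ → ℕ, StrictMono N ∧ N 0 = n ∧ ∃ H : ℕ → X,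
      ∀ j, H j ∈ span 𝕜 (x '' Ioc (N j) (N (j + 1))) ∧ ‖f - H j‖ < e := by
  choose next hnext H hH using exists_mem_span_image_Ioc_norm_sub_lt hbi hdense hf
  refine ⟨fun j => next^[j] n, strictMono_nat_of_lt_succ fun j => ?_, rfl,
    fun j => H (next^[j] n), fun j => ?_⟩
  · rw [iterate_succ_apply']
    exact hnext _
  · dsimp only
    rw [iterate_succ_apply']
    exact hH _

lemma exists_mem_span_image_Ioi_iSup_lt_norm_add_lt {M : ℝ} (hM : ∀ i, ‖xs i‖ ≤ M) {f : X}
    {e : ℝ} (hf : normingSeminorm (span 𝕜 (range xs)) f < e) (n : ℕ) {δ : ℝ} (hδ : 0 < δ) :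
    ∃ g ∈ span 𝕜 (x '' Ioi n), (⨆ i, ‖xs i g‖) < δ ∧ ‖f + g‖ < e := by
  obtain ⟨N, hN, hN0, H, hH⟩ := exists_strictMono_blocks_norm_sub_lt hbi hdense hf n
  have hM0 : 0 ≤ M := (norm_nonneg _).trans (hM 0)
  have he : 0 < e := (apply_nonneg _ f).trans_lt hf
  set B := M * (‖f‖ + e)
  have hB0 : 0 ≤ B := by positivity
  have hB : ∀ i j, ‖xs i (H j)‖ ≤ B := fun i j => by
    have := norm_le_norm_add_norm_sub f (H j)
    exact (xs i).le_of_opNorm_le_of_le (hM i) (by linarith [(hH j).2])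
  obtain ⟨p, hp⟩ := exists_nat_gt (B / δ)
  have hp0 : 0 < p := by exact_mod_cast (div_nonneg hB0 hδ.le).trans_lt hp
  have hp0' : (0 : ℝ) < p := Nat.cast_pos.mpr hp0
  refine ⟨-((p : 𝕜)⁻¹ • ∑ j ∈ Finset.range p, H j), ?_, ?_, ?_⟩
  · refine neg_mem (smul_mem _ _ (sum_mem fun j _ => span_mono (image_mono ?_) (hH j).1))
    exact (Ioc_subset_Ioi_self).trans (Ioi_subset_Ioi (hN0 ▸ hN.monotone (Nat.zero_le j)))
  · refine (ciSup_le fun i => ?_).trans_lt ((div_lt_iff₀ hp0').mpr ((div_lt_iff₀' hδ).mp hp))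
    rw [map_neg, map_smul, norm_neg, norm_smul, norm_inv, RCLike.norm_natCast, ← div_eq_inv_mul]
    exact div_le_div_of_nonneg_right (norm_apply_sum_le_of_pairwise_disjoint hbi
      hN.monotone.pairwise_disjoint_on_Ioc_succ (fun j => (hH j).1) _ i hB0 fun j => hB i j) hp0'.le
  · have hfg : f + -((p : 𝕜)⁻¹ • ∑ j ∈ Finset.range p, H j) =
        (p : 𝕜)⁻¹ • ∑ j ∈ Finset.range p, (f - H j) := by
      rw [Finset.sum_sub_distrib, smul_sub, Finset.sum_const, Finset.card_range,
        ← Nat.cast_smul_eq_nsmul 𝕜, inv_smul_smul₀ (Nat.cast_ne_zero.mpr hp0.ne'),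
        sub_eq_add_neg]
    rw [hfg]
    exact norm_inv_natCast_smul_sum_lt hp0 fun j => (hH j).2

end Biorthogonal

theorem non_norming_gives_flat_almost_cancellable_vectors_general
    {𝕜 : Type*} [RCLike 𝕜] {X : Type*} [NormedAddCommGroup X] [NormedSpace 𝕜 X]
    (x : ℕ → X) (xs : ℕ → X →L[𝕜] 𝕜)
    (hdense : Dense (Submodule.span 𝕜 (Set.range x) : Set X))
    (hbi : ∀ n k, xs n (x k) = if n = k then 1 else 0)
    (hxsb : ∃ M : ℝ, ∀ n, ‖xs n‖ ≤ M)
    (hnotnorming : ¬ ∃ c : ℝ, 0 < c ∧ c ≤ 1 ∧ ∀ f : X, c * ‖f‖ ≤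
      sSup {r : ℝ | ∃ g ∈ Submodule.span 𝕜 (Set.range xs), ‖g‖ ≤ 1 ∧ r = ‖g f‖}) :
    ∀ ε : ℝ, 0 < ε → ∀ r : ℝ, 0 < r → ∀ m : ℕ, ∃ f : X,
      (f ∈ Submodule.span 𝕜 (x '' {n | m < n}) ∧ ‖f‖ = r) ∧
      (⨆ n, ‖xs n f‖) < ε ∧
      (∀ n : ℕ, m < n → ∀ δ : ℝ, 0 < δ → ∃ g ∈ Submodule.span 𝕜 (x '' {k | n < k}),
        (⨆ i, ‖xs i g‖) < δ ∧ ‖f + g‖ < ε) := by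
  intro ε hε r hr m
  obtain ⟨M, hM⟩ := hxsb
  have hflat : ∀ c : ℝ, 0 < c → c ≤ 1 →
      ∃ u : X, normingSeminorm (span 𝕜 (range xs)) u < c * ‖u‖ := by
    push Not at hnotnorming
    exact hnotnorming
  have hM0 : 0 ≤ M := (norm_nonneg _).trans (hM 0)
  obtain ⟨f, hfm, hfr, hf⟩ := exists_mem_span_image_Ioi_norm_eq_normingSeminorm_lt hbi hdense
    hflat m hr (div_pos hε (by linarith : (0 : ℝ) < M + 1))
  have hMf := (lt_div_iff₀' (by linarith : (0 : ℝ) < M + 1)).mp hf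
  have hθf := apply_nonneg (normingSeminorm (span 𝕜 (range xs))) f
  refine ⟨f, ⟨hfm, hfr⟩, ?_, fun n _ δ hδ =>
    exists_mem_span_image_Ioi_iSup_lt_norm_add_lt hbi hdense hM (by nlinarith) n hδ⟩
  refine (ciSup_le fun i => ?_).trans_lt (by nlinarith :
    M * normingSeminorm (span 𝕜 (range xs)) f < ε)
  exact (norm_apply_le_norm_mul_normingSeminorm (subset_span (mem_range_self i)) f).trans
    (mul_le_mul_of_nonneg_right (hM i) hθf)

/-- If `𝒳*` is bounded and `⟨𝒳*⟩` is not a norming subspace of `𝕏*`, then for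
all `ε > 0`, `r > 0` and `m ∈ ℕ` there is `f ∈ 𝕏` such that: (i) `f` lies in the span of
`𝒳_{>m}` and `‖f‖ = r`; (ii) `‖f‖_∞ < ε`; (iii) for each `n > m` and each `δ > 0` there is `g`
in the span of `𝒳_{>n}` with `‖g‖_∞ < δ` and `‖f + g‖ < ε`. -/
theorem non_norming_gives_flat_almost_cancellable_vectors
    {𝕜 : Type*} [RCLike 𝕜] {X : Type*} [NormedAddCommGroup X] [NormedSpace 𝕜 X]
    [CompleteSpace X] [TopologicalSpace.SeparableSpace X]
    (hinf : ¬ FiniteDimensional 𝕜 X)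
    (x : ℕ → X) (xs : ℕ → X →L[𝕜] 𝕜)
    (hdense : Dense (Submodule.span 𝕜 (Set.range x) : Set X))
    (hbi : ∀ n k, xs n (x k) = if n = k then 1 else 0)
    (hxsb : ∃ M : ℝ, ∀ n, ‖xs n‖ ≤ M)
    (hnotnorming : ¬ ∃ c : ℝ, 0 < c ∧ c ≤ 1 ∧ ∀ f : X, c * ‖f‖ ≤
      sSup {r : ℝ | ∃ g ∈ Submodule.span 𝕜 (Set.range xs), ‖g‖ ≤ 1 ∧ r = ‖g f‖}) :
    ∀ ε : ℝ, 0 < ε → ∀ r : ℝ, 0 < r → ∀ m : ℕ, ∃ f : X,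
      (f ∈ Submodule.span 𝕜 (x '' {n | m < n}) ∧ ‖f‖ = r) ∧
      (⨆ n, ‖xs n f‖) < ε ∧
      (∀ n : ℕ, m < n → ∀ δ : ℝ, 0 < δ → ∃ g ∈ Submodule.span 𝕜 (x '' {k | n < k}),
        (⨆ i, ‖xs i g‖) < δ ∧ ‖f + g‖ < ε) :=
  non_norming_gives_flat_almost_cancellable_vectors_general x xs hdense hbi hxsb hnotnorming
end

section
/- Let 𝒳 be a fundamental minimal system for 𝕏 that is bounded-oscillation unconditional with function Φ. Then for every f in the linear span ⟨𝒳⟩, every 0 < t ≤ 1, and every A ⊆ supp(f) with osc(f,A) ≤ 1/t, one has ‖P_A(f)‖ ≤ Φ(t) · sup{|f*(f)| : f* ∈ ⟨𝒳*⟩, ‖f*‖ ≤ 1}. -/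
/-!
Let `Y` be the intersection of the kernels of `x_n*`, `n ∈ A`. Every `f - y` with `y ∈ Y` has the
same coefficients as `f` on `A`, so the bounded-oscillation hypothesis applied to `f - y` gives
`‖P_A f‖ ≤ Φ(t) ‖f - y‖`, hence `‖P_A f‖ ≤ Φ(t) dist(f, Y)`. By Hahn–Banach on `X ⧸ Y`, the
distance `dist(f, Y)` is attained by a functional of norm at most `1` vanishing on `Y`, and such a
functional is a linear combination of the `x_n*`, `n ∈ A`.
-/

open Metric

section

variable {𝕜 X : Type*} [RCLike 𝕜] [SeminormedAddCommGroup X] [NormedSpace 𝕜 X]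

theorem exists_dual_vanishing_eq_infDist (Y : Submodule 𝕜 X) (f : X) :
    ∃ g : X →L[𝕜] 𝕜, ‖g‖ ≤ 1 ∧ Y ≤ LinearMap.ker (g : X →ₗ[𝕜] 𝕜) ∧ g f = infDist f Y := by
  obtain ⟨g, hg, hgf⟩ := exists_dual_vector'' 𝕜 (Y.mkQ f)
  refine ⟨g.comp Y.mkQL, ?_, fun y hy => ?_, ?_⟩
  · refine ContinuousLinearMap.opNorm_le_bound _ zero_le_one fun z => ?_
    calc ‖g (Y.mkQ z)‖ ≤ ‖g‖ * ‖Y.mkQ z‖ := g.le_opNorm _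
      _ ≤ 1 * ‖z‖ := mul_le_mul hg (Submodule.Quotient.norm_mk_le Y z) (norm_nonneg _) zero_le_one
  · simp [(Submodule.Quotient.mk_eq_zero Y).mpr hy]
  · rw [ContinuousLinearMap.comp_apply, Submodule.mkQL_apply, hgf]
    exact congrArg _ (QuotientAddGroup.norm_mk (S := Y.toAddSubgroup) f)

theorem ContinuousLinearMap.mem_span_of_iInf_ker_le_ker {ι : Type*} [Finite ι]
    {L : ι → X →L[𝕜] 𝕜} {K : X →L[𝕜] 𝕜}
    (h : ⨅ i, LinearMap.ker (L i : X →ₗ[𝕜] 𝕜) ≤ LinearMap.ker (K : X →ₗ[𝕜] 𝕜)) :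
    K ∈ Submodule.span 𝕜 (Set.range L) := by
  have := Fintype.ofFinite ι
  have hlin := _root_.mem_span_of_iInf_ker_le_ker (L := fun i => (L i : X →ₗ[𝕜] 𝕜))
    (K := (K : X →ₗ[𝕜] 𝕜)) h
  obtain ⟨c, hc⟩ := (Submodule.mem_span_range_iff_exists_fun 𝕜).1 hlin
  refine (Submodule.mem_span_range_iff_exists_fun 𝕜).2 ⟨c, ?_⟩
  ext z
  simpa using LinearMap.congr_fun hc z

theorem Metric.le_mul_infDist {Y : Set X} (hY : Y.Nonempty) {f : X} {a C : ℝ} (hC : 0 ≤ C)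
    (h : ∀ y ∈ Y, a ≤ C * dist f y) : a ≤ C * infDist f Y := by
  rw [infDist_eq_iInf, Real.mul_iInf_of_nonneg hC]
  have := hY.to_subtype
  exact le_ciInf fun y => h y y.2

theorem apply_sub_eq_of_mem_iInf_ker {ι : Type*} {xs : ι → X →L[𝕜] 𝕜} {A : Finset ι} {y : X}
    (hy : y ∈ ⨅ n : A, LinearMap.ker (xs n : X →ₗ[𝕜] 𝕜)) (f : X) {n : ι} (hn : n ∈ A) :
    xs n (f - y) = xs n f := by
  have hyn : xs n y = 0 := (Submodule.mem_iInf _).1 hy ⟨n, hn⟩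
  rw [map_sub, hyn, sub_zero]

theorem norm_sum_le_mul_infDist_iInf_ker {ι : Type*} {x : ι → X} {xs : ι → X →L[𝕜] 𝕜}
    {A : Finset ι} {C : ℝ} (hC : 0 ≤ C) (f : X)
    (hbound : ∀ y ∈ ⨅ n : A, LinearMap.ker (xs n : X →ₗ[𝕜] 𝕜),
      ‖∑ n ∈ A, xs n (f - y) • x n‖ ≤ C * ‖f - y‖) :
    ‖∑ n ∈ A, xs n f • x n‖ ≤
      C * infDist f (⨅ n : A, LinearMap.ker (xs n : X →ₗ[𝕜] 𝕜) : Submodule 𝕜 X) := by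
  refine Metric.le_mul_infDist ⟨0, Submodule.zero_mem _⟩ hC fun y hy => ?_
  have hsum : ∑ n ∈ A, xs n (f - y) • x n = ∑ n ∈ A, xs n f • x n :=
    Finset.sum_congr rfl fun n hn => by rw [apply_sub_eq_of_mem_iInf_ker hy f hn]
  rw [dist_eq_norm, ← hsum]
  exact hbound y hy

theorem infDist_iInf_ker_le_sSup {ι : Type*} (xs : ι → X →L[𝕜] 𝕜) (A : Finset ι) (f : X) :
    infDist f (⨅ n : A, LinearMap.ker (xs n : X →ₗ[𝕜] 𝕜) : Submodule 𝕜 X) ≤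
      sSup {r : ℝ | ∃ g ∈ Submodule.span 𝕜 (Set.range xs), ‖g‖ ≤ 1 ∧ r = ‖g f‖} := by
  obtain ⟨g, hg, hker, hgf⟩ :=
    exists_dual_vanishing_eq_infDist (⨅ n : A, LinearMap.ker (xs n : X →ₗ[𝕜] 𝕜)) f
  have hspan : g ∈ Submodule.span 𝕜 (Set.range xs) :=
    Submodule.span_mono (Set.range_comp_subset_range _ xs)
      (ContinuousLinearMap.mem_span_of_iInf_ker_le_ker (L := fun n : A => xs n) hker)
  have hbdd : BddAbove {r : ℝ | ∃ g ∈ Submodule.span 𝕜 (Set.range xs), ‖g‖ ≤ 1 ∧ r = ‖g f‖} := by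
    refine ⟨‖f‖, ?_⟩
    rintro r ⟨g', -, hg', rfl⟩
    simpa using g'.le_of_opNorm_le hg' f
  refine le_csSup hbdd ⟨g, hspan, hg, ?_⟩
  rw [hgf, RCLike.norm_ofReal, abs_of_nonneg infDist_nonneg]

end

theorem bou_projection_bounded_by_bidual_norm_general
    {𝕜 : Type*} [RCLike 𝕜] {X : Type*} [NormedAddCommGroup X] [NormedSpace 𝕜 X]
    (x : ℕ → X) (xs : ℕ → X →L[𝕜] 𝕜)
    (hbi : ∀ n k, xs n (x k) = if n = k then 1 else 0)
    (Φ : ℝ → ℝ)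
    (hBOU : ∀ (f : X) (t : ℝ), 0 < t → t ≤ 1 → ∀ A : Finset ℕ,
      (∀ n ∈ A, ∀ k ∈ A, xs k f ≠ 0 → t * ‖xs n f‖ ≤ ‖xs k f‖) →
      ‖∑ n ∈ A, xs n f • x n‖ ≤ Φ t * ‖f‖) :
    ∀ f ∈ Submodule.span 𝕜 (Set.range x), ∀ t : ℝ, 0 < t → t ≤ 1 → ∀ A : Finset ℕ,
      (∀ n ∈ A, xs n f ≠ 0) →
      (∀ n ∈ A, ∀ k ∈ A, xs k f ≠ 0 → t * ‖xs n f‖ ≤ ‖xs k f‖) →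
      ‖∑ n ∈ A, xs n f • x n‖ ≤ Φ t *
        sSup {r : ℝ | ∃ g ∈ Submodule.span 𝕜 (Set.range xs), ‖g‖ ≤ 1 ∧ r = ‖g f‖} := by
  intro f _ t ht ht1 A _ hosc
  have hx0 : x 0 ≠ 0 := fun h => by simpa [h] using hbi 0 0
  have hΦ : 0 ≤ Φ t := by
    have h := hBOU (x 0) t ht ht1 ∅ (by simp)
    rw [Finset.sum_empty, norm_zero] at h
    exact nonneg_of_mul_nonneg_left h (norm_pos_iff.2 hx0)
  calc ‖∑ n ∈ A, xs n f • x n‖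
      ≤ Φ t * infDist f (⨅ n : A, LinearMap.ker (xs n : X →ₗ[𝕜] 𝕜) : Submodule 𝕜 X) := by
        refine norm_sum_le_mul_infDist_iInf_ker hΦ f fun y hy => hBOU _ t ht ht1 A ?_
        intro n hn k hk hk0
        rw [apply_sub_eq_of_mem_iInf_ker hy f hk] at hk0 ⊢
        rw [apply_sub_eq_of_mem_iInf_ker hy f hn]
        exact hosc n hn k hk hk0
    _ ≤ _ := mul_le_mul_of_nonneg_left (infDist_iInf_ker_le_sSup xs A f) hΦ

/-- If `𝒳` is bounded-oscillation unconditional with function `Φ`, then for every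
`f` in the span of `𝒳`, every `0 < t ≤ 1` and every `A ⊆ supp(f)` with `osc(f,A) ≤ 1/t`
(equivalently `t‖x_n*(f)‖ ≤ ‖x_k*(f)‖` for all `n ∈ A` and `k ∈ A` with `x_k*(f) ≠ 0`),
one has `‖P_A(f)‖ ≤ Φ(t) · sup{|f*(f)| : f* ∈ ⟨𝒳*⟩, ‖f*‖ ≤ 1}`. -/
theorem bou_projection_bounded_by_bidual_norm
    {𝕜 : Type*} [RCLike 𝕜] {X : Type*} [NormedAddCommGroup X] [NormedSpace 𝕜 X]
    [CompleteSpace X] [TopologicalSpace.SeparableSpace X]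
    (hinf : ¬ FiniteDimensional 𝕜 X)
    (x : ℕ → X) (xs : ℕ → X →L[𝕜] 𝕜)
    (hdense : Dense (Submodule.span 𝕜 (Set.range x) : Set X))
    (hbi : ∀ n k, xs n (x k) = if n = k then 1 else 0)
    (Φ : ℝ → ℝ)
    (hBOU : ∀ (f : X) (t : ℝ), 0 < t → t ≤ 1 → ∀ A : Finset ℕ,
      (∀ n ∈ A, ∀ k ∈ A, xs k f ≠ 0 → t * ‖xs n f‖ ≤ ‖xs k f‖) →
      ‖∑ n ∈ A, xs n f • x n‖ ≤ Φ t * ‖f‖) :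
    ∀ f ∈ Submodule.span 𝕜 (Set.range x), ∀ t : ℝ, 0 < t → t ≤ 1 → ∀ A : Finset ℕ,
      (∀ n ∈ A, xs n f ≠ 0) →
      (∀ n ∈ A, ∀ k ∈ A, xs k f ≠ 0 → t * ‖xs n f‖ ≤ ‖xs k f‖) →
      ‖∑ n ∈ A, xs n f • x n‖ ≤ Φ t *
        sSup {r : ℝ | ∃ g ∈ Submodule.span 𝕜 (Set.range xs), ‖g‖ ≤ 1 ∧ r = ‖g f‖} :=
  bou_projection_bounded_by_bidual_norm_general x xs hbi Φ hBOU
end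

section
/- Let 𝒳 be a fundamental minimal system for 𝕏 that is bounded-oscillation unconditional with function Φ and is also C-superdemocratic for some C ≥ 1. Then the bidual system of 𝒳 is C·Φ(1)-superdemocratic; explicitly, for all finite A, B ⊆ ℕ with |B| ≤ |A| and all scalars (ε'_n)_{n∈B}, (ε_n)_{n∈A} with |ε'_n| = |ε_n| = 1, one has sup{|f*(Σ_{n∈B} ε'_n x_n)| : f* ∈ ⟨𝒳*⟩, ‖f*‖ ≤ 1} ≤ C·Φ(1) · sup{|f*(Σ_{n∈A} ε_n x_n)| : f* ∈ ⟨𝒳*⟩, ‖f*‖ ≤ 1}. -/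
/-!
Superdemocracy gives `‖Σ_B ε'_n x_n‖ ≤ C ‖Σ_A ε_n x_n‖`, and the bidual norm of `Σ_B` is at most
its norm, so everything rests on bounding `f = Σ_A ε_n x_n` by `Φ(1)` times its bidual norm. Any `v`
with `P_A v = f` has unimodular coefficients on `A`, so bounded-oscillation unconditionality at
`t = 1` gives `‖f‖ = ‖P_A v‖ ≤ Φ(1) ‖v‖`; that is, `‖f‖ ≤ Φ(1) ‖f + ker P_A‖` in `𝕏 ⧸ ker P_A`.
Hahn–Banach on this quotient yields a functional of norm at most one, vanishing on `ker P_A` and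
norming `f + ker P_A`; vanishing on `ker P_A` makes it the combination `Σ_A g(x_n) x_n*` of the
dual system.
-/

open Finset Submodule

section CoordProj

variable {𝕜 : Type*} [NormedField 𝕜] {X : Type*} [SeminormedAddCommGroup X] [NormedSpace 𝕜 X]
  {x : ℕ → X} {xs : ℕ → X →L[𝕜] 𝕜}

variable (x xs) in
def coordProj (A : Finset ℕ) : X →L[𝕜] X := ∑ n ∈ A, (xs n).smulRight (x n)

@[simp]
theorem coordProj_apply (A : Finset ℕ) (v : X) : coordProj x xs A v = ∑ n ∈ A, xs n v • x n := by
  simp [coordProj]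

variable (hbi : ∀ n k, xs n (x k) = if n = k then 1 else 0)
include hbi

theorem apply_sum_smul_of_biorthogonal {A : Finset ℕ} {k : ℕ} (hk : k ∈ A) (a : ℕ → 𝕜) :
    xs k (∑ n ∈ A, a n • x n) = a k := by
  simp [map_sum, hbi, hk]

theorem apply_coordProj_of_biorthogonal {A : Finset ℕ} {k : ℕ} (hk : k ∈ A) (v : X) :
    xs k (coordProj x xs A v) = xs k v := by
  rw [coordProj_apply, apply_sum_smul_of_biorthogonal hbi hk]

theorem coordProj_sum_smul_of_biorthogonal (A : Finset ℕ) (a : ℕ → 𝕜) :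
    coordProj x xs A (∑ n ∈ A, a n • x n) = ∑ n ∈ A, a n • x n := by
  rw [coordProj_apply]
  exact sum_congr rfl fun n hn => by rw [apply_sum_smul_of_biorthogonal hbi hn]

theorem coordProj_coordProj_of_biorthogonal (A : Finset ℕ) (v : X) :
    coordProj x xs A (coordProj x xs A v) = coordProj x xs A v := by
  have h := coordProj_sum_smul_of_biorthogonal hbi A fun n => xs n v
  rwa [← coordProj_apply] at h

theorem mem_span_of_forall_coordProj_eq_zero {A : Finset ℕ} {g : X →L[𝕜] 𝕜}
    (hg : ∀ v, coordProj x xs A v = 0 → g v = 0) : g ∈ span 𝕜 (Set.range xs) := by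
  have hg_eq : g = ∑ n ∈ A, g (x n) • xs n := by
    ext v
    have hv := hg (v - coordProj x xs A v) (by
      rw [map_sub, coordProj_coordProj_of_biorthogonal hbi, sub_self])
    rw [map_sub, sub_eq_zero] at hv
    simp [hv, map_sum, mul_comm]
  rw [hg_eq]
  exact sum_mem fun n _ => smul_mem _ _ (subset_span ⟨n, rfl⟩)

end CoordProj

theorem Submodule.exists_dual_eq_zero_of_mem_apply_eq_norm_mk {𝕜 : Type*} [RCLike 𝕜]
    {X : Type*} [SeminormedAddCommGroup X] [NormedSpace 𝕜 X] (K : Submodule 𝕜 X) (y : X) :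
    ∃ g : StrongDual 𝕜 X, ‖g‖ ≤ 1 ∧ (∀ k ∈ K, g k = 0) ∧ g y = ‖K.mkQ y‖ := by
  obtain ⟨ψ, hψ, hψy⟩ := exists_dual_vector'' 𝕜 (K.mkQ y)
  refine ⟨ψ.comp K.mkQL, ?_, fun k hk => ?_, hψy⟩
  · refine (ψ.opNorm_comp_le _).trans (mul_le_one₀ hψ (norm_nonneg _) ?_)
    exact K.mkQL.opNorm_le_bound zero_le_one fun v => by
      simpa using Submodule.Quotient.norm_mk_le K v
  · simp [(Submodule.Quotient.mk_eq_zero K).mpr hk]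

section BidualNorm

variable {𝕜 : Type*} [RCLike 𝕜] {X : Type*} [SeminormedAddCommGroup X] [NormedSpace 𝕜 X]

/-- For `S = span 𝕜 (range xs)` this is the norm of the bidual system in the statement. -/
noncomputable def bidualNormOn (S : Submodule 𝕜 (StrongDual 𝕜 X)) (f : X) : ℝ :=
  sSup {r : ℝ | ∃ g ∈ S, ‖g‖ ≤ 1 ∧ r = ‖g f‖}

variable (S : Submodule 𝕜 (StrongDual 𝕜 X))

theorem bidualNormOn_le_norm (f : X) : bidualNormOn S f ≤ ‖f‖ :=
  Real.sSup_le (fun _ ⟨g, _, hg, hr⟩ => hr ▸ by simpa using g.le_of_opNorm_le hg f) (norm_nonneg f)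

theorem le_bidualNormOn {g : StrongDual 𝕜 X} (hgS : g ∈ S) (hg : ‖g‖ ≤ 1) (f : X) :
    ‖g f‖ ≤ bidualNormOn S f :=
  le_csSup ⟨‖f‖, fun _ ⟨g, _, hg, hr⟩ => hr ▸ by simpa using g.le_of_opNorm_le hg f⟩
    ⟨g, hgS, hg, rfl⟩

end BidualNorm

section UnimodularVectors

variable {𝕜 : Type*} [RCLike 𝕜] {X : Type*} [SeminormedAddCommGroup X] [NormedSpace 𝕜 X]
  {x : ℕ → X} {xs : ℕ → X →L[𝕜] 𝕜} (hbi : ∀ n k, xs n (x k) = if n = k then 1 else 0)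
include hbi

theorem norm_le_mul_bidualNormOn_of_forall_coordProj_eq {A : Finset ℕ} {y : X} {c : ℝ}
    (hc : 0 < c) (h : ∀ v, coordProj x xs A v = coordProj x xs A y → ‖y‖ ≤ c * ‖v‖) :
    ‖y‖ ≤ c * bidualNormOn (span 𝕜 (Set.range xs)) y := by
  set K := LinearMap.ker (coordProj x xs A : X →ₗ[𝕜] X)
  obtain ⟨g, hg1, hgK, hgy⟩ := K.exists_dual_eq_zero_of_mem_apply_eq_norm_mk y
  have hquot : ‖y‖ ≤ c * ‖K.mkQ y‖ := by
    rw [← div_le_iff₀' hc]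
    refine QuotientAddGroup.le_norm_iff.mpr fun v hv => ?_
    have hvy : coordProj x xs A v = coordProj x xs A y := by
      rw [← sub_eq_zero, ← map_sub]
      exact (Submodule.Quotient.eq K).mp hv
    exact (div_le_iff₀' hc).mpr (h v hvy)
  have hgS : g ∈ span 𝕜 (Set.range xs) :=
    mem_span_of_forall_coordProj_eq_zero hbi fun v hv => hgK v hv
  calc ‖y‖ ≤ c * ‖K.mkQ y‖ := hquot
    _ = c * ‖g y‖ := by rw [hgy, RCLike.norm_ofReal, abs_norm]
    _ ≤ c * bidualNormOn _ y := by gcongr; exact le_bidualNormOn _ hgS hg1 y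

variable {c : ℝ} (hflat : ∀ (f : X) (A : Finset ℕ), (∀ n ∈ A, ∀ k ∈ A, ‖xs n f‖ = ‖xs k f‖) →
  ‖coordProj x xs A f‖ ≤ c * ‖f‖)
include hflat

theorem one_le_of_forall_norm_coordProj_le : 1 ≤ c := by
  have hx0 : 0 < ‖x 0‖ := by
    refine (norm_nonneg _).lt_of_ne' fun h0 => ?_
    have h := (xs 0).le_opNorm (x 0)
    norm_num [hbi, h0] at h
  have h := hflat (x 0) {0} (by simp)
  rw [coordProj_apply, sum_singleton, hbi, if_pos rfl, one_smul] at h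
  exact one_le_of_le_mul_right₀ hx0 h

theorem norm_sum_unimodular_le_mul_bidualNormOn (A : Finset ℕ) (ε : ℕ → 𝕜)
    (hε : ∀ n ∈ A, ‖ε n‖ = 1) :
    ‖∑ n ∈ A, ε n • x n‖ ≤ c * bidualNormOn (span 𝕜 (Set.range xs)) (∑ n ∈ A, ε n • x n) := by
  have hc : 0 < c := zero_lt_one.trans_le (one_le_of_forall_norm_coordProj_le hbi hflat)
  refine norm_le_mul_bidualNormOn_of_forall_coordProj_eq hbi (A := A) hc fun v hv => ?_
  rw [coordProj_sum_smul_of_biorthogonal hbi] at hv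
  have hcoef : ∀ n ∈ A, ‖xs n v‖ = 1 := fun n hn => by
    rw [← apply_coordProj_of_biorthogonal hbi hn, hv, apply_sum_smul_of_biorthogonal hbi hn,
      hε n hn]
  rw [← hv]
  exact hflat v A fun n hn k hk => by rw [hcoef n hn, hcoef k hk]

end UnimodularVectors

theorem bou_superdemocratic_passes_to_bidual_general
    {𝕜 : Type*} [RCLike 𝕜] {X : Type*} [NormedAddCommGroup X] [NormedSpace 𝕜 X]
    (x : ℕ → X) (xs : ℕ → X →L[𝕜] 𝕜)
    (hbi : ∀ n k, xs n (x k) = if n = k then 1 else 0)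
    (Φ : ℝ → ℝ)
    (hBOU : ∀ (f : X) (t : ℝ), 0 < t → t ≤ 1 → ∀ A : Finset ℕ,
      (∀ n ∈ A, ∀ k ∈ A, xs k f ≠ 0 → t * ‖xs n f‖ ≤ ‖xs k f‖) →
      ‖∑ n ∈ A, xs n f • x n‖ ≤ Φ t * ‖f‖)
    (C : ℝ) (hC : 1 ≤ C)
    (hSD : ∀ (A B : Finset ℕ), B.card ≤ A.card → ∀ ε' ε : ℕ → 𝕜,
      (∀ n ∈ B, ‖ε' n‖ = 1) → (∀ n ∈ A, ‖ε n‖ = 1) →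
      ‖∑ n ∈ B, ε' n • x n‖ ≤ C * ‖∑ n ∈ A, ε n • x n‖) :
    ∀ (A B : Finset ℕ), B.card ≤ A.card → ∀ ε' ε : ℕ → 𝕜,
      (∀ n ∈ B, ‖ε' n‖ = 1) → (∀ n ∈ A, ‖ε n‖ = 1) →
      sSup {r : ℝ | ∃ g ∈ Submodule.span 𝕜 (Set.range xs), ‖g‖ ≤ 1 ∧
          r = ‖g (∑ n ∈ B, ε' n • x n)‖} ≤ C * Φ 1 *
        sSup {r : ℝ | ∃ g ∈ Submodule.span 𝕜 (Set.range xs), ‖g‖ ≤ 1 ∧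
          r = ‖g (∑ n ∈ A, ε n • x n)‖} := by
  intro A B hcard ε' ε hε' hε
  have hflat : ∀ (f : X) (A : Finset ℕ), (∀ n ∈ A, ∀ k ∈ A, ‖xs n f‖ = ‖xs k f‖) →
      ‖coordProj x xs A f‖ ≤ Φ 1 * ‖f‖ := fun f A hA => by
    simpa using hBOU f 1 one_pos le_rfl A fun n hn k hk _ => by rw [one_mul, hA n hn k hk]
  change bidualNormOn _ _ ≤ C * Φ 1 * bidualNormOn _ _
  calc bidualNormOn _ (∑ n ∈ B, ε' n • x n)
      ≤ ‖∑ n ∈ B, ε' n • x n‖ := bidualNormOn_le_norm _ _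
    _ ≤ C * ‖∑ n ∈ A, ε n • x n‖ := hSD A B hcard ε' ε hε' hε
    _ ≤ C * (Φ 1 * bidualNormOn _ (∑ n ∈ A, ε n • x n)) :=
      mul_le_mul_of_nonneg_left (norm_sum_unimodular_le_mul_bidualNormOn hbi hflat A ε hε)
        (zero_le_one.trans hC)
    _ = C * Φ 1 * bidualNormOn _ _ := (mul_assoc _ _ _).symm

/-- If `𝒳` is bounded-oscillation unconditional with function `Φ` and
`C`-superdemocratic, then the bidual system of `𝒳` is `C·Φ(1)`-superdemocratic: for all finite
`A, B ⊆ ℕ` with `|B| ≤ |A|` and unimodular scalars `ε', ε`,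
`sup{|f*(Σ_{n∈B} ε'_n x_n)| : f* ∈ ⟨𝒳*⟩, ‖f*‖ ≤ 1} ≤
  C·Φ(1) · sup{|f*(Σ_{n∈A} ε_n x_n)| : f* ∈ ⟨𝒳*⟩, ‖f*‖ ≤ 1}`. -/
theorem bou_superdemocratic_passes_to_bidual
    {𝕜 : Type*} [RCLike 𝕜] {X : Type*} [NormedAddCommGroup X] [NormedSpace 𝕜 X]
    [CompleteSpace X] [TopologicalSpace.SeparableSpace X]
    (hinf : ¬ FiniteDimensional 𝕜 X)
    (x : ℕ → X) (xs : ℕ → X →L[𝕜] 𝕜)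
    (hdense : Dense (Submodule.span 𝕜 (Set.range x) : Set X))
    (hbi : ∀ n k, xs n (x k) = if n = k then 1 else 0)
    (Φ : ℝ → ℝ)
    (hBOU : ∀ (f : X) (t : ℝ), 0 < t → t ≤ 1 → ∀ A : Finset ℕ,
      (∀ n ∈ A, ∀ k ∈ A, xs k f ≠ 0 → t * ‖xs n f‖ ≤ ‖xs k f‖) →
      ‖∑ n ∈ A, xs n f • x n‖ ≤ Φ t * ‖f‖)
    (C : ℝ) (hC : 1 ≤ C)
    (hSD : ∀ (A B : Finset ℕ), B.card ≤ A.card → ∀ ε' ε : ℕ → 𝕜,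
      (∀ n ∈ B, ‖ε' n‖ = 1) → (∀ n ∈ A, ‖ε n‖ = 1) →
      ‖∑ n ∈ B, ε' n • x n‖ ≤ C * ‖∑ n ∈ A, ε n • x n‖) :
    ∀ (A B : Finset ℕ), B.card ≤ A.card → ∀ ε' ε : ℕ → 𝕜,
      (∀ n ∈ B, ‖ε' n‖ = 1) → (∀ n ∈ A, ‖ε n‖ = 1) →
      sSup {r : ℝ | ∃ g ∈ Submodule.span 𝕜 (Set.range xs), ‖g‖ ≤ 1 ∧
          r = ‖g (∑ n ∈ B, ε' n • x n)‖} ≤ C * Φ 1 *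
        sSup {r : ℝ | ∃ g ∈ Submodule.span 𝕜 (Set.range xs), ‖g‖ ≤ 1 ∧
          r = ‖g (∑ n ∈ A, ε n • x n)‖} :=
  bou_superdemocratic_passes_to_bidual_general x xs hbi Φ hBOU C hC hSD
end
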